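/- arXiv:1108.6126 — 9 statements merged into one kernel-verified Lean document; each statement's English description precedes it below -/
import Mathlib

section
/- Let K be a field with a non-archimedean absolute value. If p : A → ℝ≥0 is a map on a K-algebra A satisfying p(fg) = p(f)p(g), p(1) = 1, p(α) = |α| for all α ∈ K, then p satisfies the triangle inequality p(f+g) ≤ p(f) + p(g) for all f,g if and only if it satisfies the ultrametric inequality p(f+g) ≤ max(p(f), p(g)) for all f,g. -/
/-!
Since `abs` is non-archimedean, `p n = abs n ≤ 1` for every natural number `n`. Expanding
`(f + g) ^ n` by the binomial theorem and applying the triangle inequality termwise then gives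
`p (f + g) ^ n ≤ (n + 1) * max (p f) (p g) ^ n`, and since `(n + 1) ^ (1 / n) → 1` this forces
`p (f + g) ≤ max (p f) (p g)`. The converse is immediate.
-/

open NNReal

lemma NNReal.le_of_forall_pow_le_succ_mul_pow {x y : ℝ≥0}
    (h : ∀ n : ℕ, x ^ n ≤ (n + 1) * y ^ n) : x ≤ y := by
  by_contra! hyx
  rcases eq_zero_or_pos y with rfl | hy
  · simpa [hyx.ne'] using h 1
  obtain ⟨m, hm⟩ := Real.exists_natCast_add_one_lt_pow_of_one_lt
    (a := x / y) (by rw [one_lt_div (by exact_mod_cast hy)]; exact_mod_cast hyx)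
  rw [div_pow, lt_div_iff₀ (by positivity)] at hm
  exact hm.not_ge (by exact_mod_cast h m)

namespace MonoidWithZeroHom

variable {A : Type*} [CommSemiring A] (p : A →*₀ ℝ≥0)

lemma apply_add_pow_le_succ_mul_max_pow (hadd : ∀ f g, p (f + g) ≤ p f + p g)
    (hnat : ∀ n : ℕ, p n ≤ 1) (f g : A) (n : ℕ) :
    p (f + g) ^ n ≤ (n + 1) * max (p f) (p g) ^ n := by
  set M := max (p f) (p g)
  have hterm (k : ℕ) (hk : k ∈ Finset.range (n + 1)) :
      p (f ^ k * g ^ (n - k) * n.choose k) ≤ M ^ n := by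
    rw [map_mul, map_mul, map_pow, map_pow]
    calc p f ^ k * p g ^ (n - k) * p (n.choose k) ≤ M ^ k * M ^ (n - k) * 1 := by
          gcongr
          exacts [le_max_left _ _, le_max_right _ _, hnat _]
      _ = M ^ n := by rw [mul_one, ← pow_add, Nat.add_sub_cancel' (Finset.mem_range_succ_iff.1 hk)]
  calc p (f + g) ^ n = p (∑ k ∈ Finset.range (n + 1), f ^ k * g ^ (n - k) * n.choose k) := by
        rw [← map_pow, add_pow]
    _ ≤ ∑ k ∈ Finset.range (n + 1), p (f ^ k * g ^ (n - k) * n.choose k) :=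
        Finset.le_sum_of_subadditive p (map_zero p).le hadd _ _
    _ ≤ ∑ _k ∈ Finset.range (n + 1), M ^ n := Finset.sum_le_sum hterm
    _ = (n + 1) * M ^ n := by simp

lemma isNonarchimedean_of_natCast_le_one (hadd : ∀ f g, p (f + g) ≤ p f + p g)
    (hnat : ∀ n : ℕ, p n ≤ 1) : IsNonarchimedean p := fun f g =>
  NNReal.le_of_forall_pow_le_succ_mul_pow (p.apply_add_pow_le_succ_mul_max_pow hadd hnat f g)

end MonoidWithZeroHom

/-- Let `K` be a field with a non-archimedean absolute value `abs`.  If `p : A → ℝ≥0` is a map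
on a `K`-algebra `A` satisfying `p (f*g) = p f * p g`, `p 1 = 1` and `p (α) = abs α` for
constants `α ∈ K`, then `p` satisfies the triangle inequality iff it satisfies the
ultrametric inequality. -/
theorem stmt0 {K A : Type*} [Field K] [CommRing A] [Algebra K A]
    (abs : K → ℝ)
    (habs_nonneg : ∀ α, 0 ≤ abs α)
    (habs_mul : ∀ α β, abs (α * β) = abs α * abs β)
    (habs_add : ∀ α β, abs (α + β) ≤ max (abs α) (abs β))
    (habs_zero : ∀ α, abs α = 0 ↔ α = 0)
    (p : A → NNReal)
    (hp_mul : ∀ f g, p (f * g) = p f * p g)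
    (hp_one : p 1 = 1)
    (hp_ext : ∀ α : K, (p (algebraMap K A α) : ℝ) = abs α) :
    (∀ f g, p (f + g) ≤ p f + p g) ↔ (∀ f g, p (f + g) ≤ max (p f) (p g)) := by
  let v : AbsoluteValue K ℝ :=
    { toFun := abs, map_mul' := habs_mul, nonneg' := habs_nonneg, eq_zero' := habs_zero,
      add_le' := fun _ _ => IsNonarchimedean.add_le habs_nonneg habs_add }
  have hp_natCast (n : ℕ) : p n ≤ 1 := by
    rw [← NNReal.coe_le_coe, ← map_natCast (algebraMap K A), hp_ext]
    exact IsNonarchimedean.apply_natCast_le_one (f := v) habs_add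
  have hp_zero : p 0 = 0 := by
    rw [← NNReal.coe_eq_zero, ← map_zero (algebraMap K A), hp_ext, habs_zero]
  let φ : A →*₀ ℝ≥0 :=
    { toFun := p, map_zero' := hp_zero, map_one' := hp_one, map_mul' := hp_mul }
  exact ⟨fun htri => φ.isNonarchimedean_of_natCast_le_one htri hp_natCast,
    fun hna _ _ => IsNonarchimedean.add_le (fun _ => zero_le) hna⟩
end

section
/- Let K° be a valuation ring with fraction field K, let A be a flat K°-algebra, and let I be an ideal of A ⊗_{K°} K. Then A/(I ∩ A) is flat over K° and the ideal generated by I ∩ A in A ⊗_{K°} K equals I. Moreover, if J is any ideal of A such that A/J is flat over K° and J generates I in A ⊗_{K°} K, then J = I ∩ A. -/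
open TensorProduct


/-- Over a Bézout domain, torsion-free modules are flat. -/
lemma flat_of_torsionFree {R M : Type*} [CommRing R] [IsDomain R] [IsBezout R]
    [AddCommGroup M] [Module R M] [NoZeroSMulDivisors R M] : Module.Flat R M := by
  rw [Module.Flat.iff_rTensor_injective]
  intro I hfg
  obtain ⟨a, ha⟩ := (IsBezout.isPrincipal_of_FG I hfg)
  subst ha
  rcases eq_or_ne a 0 with rfl | ha
  · haveI : Subsingleton (Submodule.span R ({0} : Set R)) := by
      rw [Submodule.span_zero_singleton]; infer_instance
    intro x y _
    exact Subsingleton.elim x y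
  · set e := LinearEquiv.toSpanNonzeroSingleton R R a ha
    have hval : ∀ t : R, ((e t : Submodule.span R {a}) : R) = t • a := fun t => rfl
    have hcomp : (Ideal.span {a}).subtype ∘ₗ (e : R →ₗ[R] Submodule.span R {a})
        = a • (LinearMap.id (M := R) (R := R)) := by
      apply LinearMap.ext
      intro t
      simp only [LinearMap.comp_apply, LinearEquiv.coe_coe, Submodule.subtype_apply,
        LinearMap.smul_apply, LinearMap.id_apply, smul_eq_mul]
      show ((e t : Submodule.span R {a}) : R) = a * t
      rw [hval t, smul_eq_mul, mul_comm]
    have hinj : Function.Injective (LinearMap.rTensor M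
        ((Ideal.span {a}).subtype ∘ₗ (e : R →ₗ[R] Submodule.span R {a}))) := by
      rw [hcomp]
      intro x y hxy
      have h2 : LinearMap.rTensor M (a • (LinearMap.id (M := R) (R := R)))
          = a • (LinearMap.id (M := R ⊗[R] M) (R := R)) := by
        ext r m
        simp [smul_tmul']
      rw [h2] at hxy
      have h3 : a • (TensorProduct.lid R M x) = a • (TensorProduct.lid R M y) := by
        have := congrArg (TensorProduct.lid R M) hxy
        simpa using this
      have h4 := smul_right_injective M ha h3
      exact (TensorProduct.lid R M).injective h4
    rw [LinearMap.rTensor_comp] at hinj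
    intro x y hxy
    have hsurj : Function.Surjective (LinearMap.rTensor M (e : R →ₗ[R] Submodule.span R {a})) := by
      have : Function.Surjective (e : R →ₗ[R] Submodule.span R {a}) := e.surjective
      exact LinearMap.rTensor_surjective M this
    obtain ⟨x', rfl⟩ := hsurj x
    obtain ⟨y', rfl⟩ := hsurj y
    rw [← LinearMap.comp_apply, ← LinearMap.comp_apply] at hxy
    exact congrArg _ (hinj hxy)

/-- Over a domain, multiplication by a nonzero scalar on a flat module is injective. -/
lemma smul_inj_of_flat {R M : Type*} [CommRing R] [IsDomain R] [AddCommGroup M] [Module R M]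
    [Module.Flat R M] {r : R} (hr : r ≠ 0) : Function.Injective (fun m : M => r • m) := by
  have hg : Function.Injective (LinearMap.lsmul R R r) := by
    intro a b h
    exact mul_left_cancel₀ hr (by simpa using h)
  have h2 := Module.Flat.rTensor_preserves_injective_linearMap (M := M) _ hg
  have key : ∀ m : M, (TensorProduct.lid R M)
      (LinearMap.rTensor M (LinearMap.lsmul R R r) ((TensorProduct.lid R M).symm m)) = r • m := by
    intro m
    simp
  intro x y hxy
  have : (TensorProduct.lid R M)
      (LinearMap.rTensor M (LinearMap.lsmul R R r) ((TensorProduct.lid R M).symm x)) =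
      (TensorProduct.lid R M)
      (LinearMap.rTensor M (LinearMap.lsmul R R r) ((TensorProduct.lid R M).symm y)) := by
    rw [key, key]; exact hxy
  exact (TensorProduct.lid R M).symm.injective (h2 ((TensorProduct.lid R M).injective this))

section
variable {R A : Type*} [CommRing R] [IsDomain R]
    [CommRing A] [Algebra R A]
    (K : Type*) [Field K] [Algebra R K] [IsFractionRing R K]

/-- denominator clearing in `K ⊗[R] A` -/
lemma exists_denom (x : K ⊗[R] A) :
    ∃ r : R, r ≠ 0 ∧ ∃ a : A, r • x = (1 : K) ⊗ₜ[R] a := by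
  induction x with
  | zero => exact ⟨1, one_ne_zero, 0, by simp⟩
  | tmul k a =>
    obtain ⟨d, s, hs⟩ := IsLocalization.exists_integer_multiple (nonZeroDivisors R) k
    refine ⟨(d : R), nonZeroDivisors.coe_ne_zero d, s • a, ?_⟩
    rw [smul_tmul', tmul_smul, smul_tmul']
    congr 1
    rw [← hs]
    rw [Algebra.smul_def, mul_one]
  | add x y hx hy =>
    obtain ⟨r, hr, a, ha⟩ := hx
    obtain ⟨s, hs, b, hb⟩ := hy
    refine ⟨r * s, mul_ne_zero hr hs, s • a + r • b, ?_⟩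
    rw [smul_add, tmul_add, tmul_smul, tmul_smul, ← ha, ← hb]
    rw [mul_comm r s, mul_smul, mul_smul, smul_comm s r y]

/-- nonzero scalars act invertibly on ideals of `K ⊗[R] A` -/
lemma smul_mem_ideal (I' : Ideal (K ⊗[R] A)) {r : R} (hr : r ≠ 0) {x : K ⊗[R] A}
    (h : r • x ∈ I') : x ∈ I' := by
  have hk : algebraMap R K r ≠ 0 := fun h0 => hr (IsFractionRing.injective R K (by simpa using h0))
  have hu : IsUnit (algebraMap K (K ⊗[R] A) (algebraMap R K r)) :=
    (Ne.isUnit hk).map (algebraMap K (K ⊗[R] A))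
  obtain ⟨u, hu⟩ := hu
  have hx : r • x = (u : K ⊗[R] A) * x := by
    rw [hu, Algebra.smul_def, IsScalarTower.algebraMap_apply R K (K ⊗[R] A)]
  have := I'.mul_mem_left (↑u⁻¹) h
  rwa [hx, ← mul_assoc, ← Units.val_mul, inv_mul_cancel, Units.val_one, one_mul] at this

/-- injectivity of `A → K ⊗[R] A` for flat `A` -/
lemma includeRight_inj [Module.Flat R A] :
    Function.Injective (Algebra.TensorProduct.includeRight : A →ₐ[R] K ⊗[R] A) := by
  have hinj : Function.Injective (Algebra.linearMap R K) := by
    intro a b h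
    exact IsFractionRing.injective R K h
  have h2 := Module.Flat.rTensor_preserves_injective_linearMap (M := A) _ hinj
  intro a b hab
  have key : ∀ c : A, (LinearMap.rTensor A (Algebra.linearMap R K))
      ((TensorProduct.lid R A).symm c) = (1 : K) ⊗ₜ[R] c := by
    intro c
    simp
  have : (LinearMap.rTensor A (Algebra.linearMap R K)) ((TensorProduct.lid R A).symm a) =
      (LinearMap.rTensor A (Algebra.linearMap R K)) ((TensorProduct.lid R A).symm b) := by
    rw [key, key]
    simpa using hab
  exact (TensorProduct.lid R A).symm.injective (h2 this)

end


/-- Let `R = K°` be a valuation ring with fraction field `K`, `A` a flat `R`-algebra and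
`I` an ideal of `A_K = K ⊗[R] A`.  Then `A ⧸ (I ∩ A)` is flat over `R`, the ideal generated
by `I ∩ A` in `A_K` is `I`, and `I ∩ A` is the unique ideal `J` of `A` such that `A ⧸ J`
is flat over `R` and `J` generates `I` in `A_K`.  (Here `I ∩ A` is the contraction of `I`
along the canonical map `A → K ⊗[R] A`.) -/
theorem stmt2 {R A : Type*} [CommRing R] [IsDomain R] [ValuationRing R]
    [CommRing A] [Algebra R A] [Module.Flat R A]
    (K : Type*) [Field K] [Algebra R K] [IsFractionRing R K]
    (I : Ideal (K ⊗[R] A)) :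
    Module.Flat R
      (A ⧸ I.comap (Algebra.TensorProduct.includeRight : A →ₐ[R] K ⊗[R] A).toRingHom) ∧
    Ideal.map (Algebra.TensorProduct.includeRight : A →ₐ[R] K ⊗[R] A).toRingHom
      (I.comap (Algebra.TensorProduct.includeRight : A →ₐ[R] K ⊗[R] A).toRingHom) = I ∧
    ∀ J : Ideal A, Module.Flat R (A ⧸ J) →
      Ideal.map (Algebra.TensorProduct.includeRight : A →ₐ[R] K ⊗[R] A).toRingHom J = I →
      J = I.comap (Algebra.TensorProduct.includeRight : A →ₐ[R] K ⊗[R] A).toRingHom := by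
  set f : A →ₐ[R] K ⊗[R] A := Algebra.TensorProduct.includeRight with hf
  have hfa : ∀ a : A, f.toRingHom a = (1 : K) ⊗ₜ[R] a := fun a => rfl
  set J₀ : Ideal A := I.comap f.toRingHom with hJ₀
  -- torsion-freeness of A ⧸ J₀
  haveI hTF : NoZeroSMulDivisors R (A ⧸ J₀) := by
    refine ⟨fun {c x} hcx => ?_⟩
    rcases eq_or_ne c 0 with rfl | hc
    · exact Or.inl rfl
    right
    obtain ⟨a, rfl⟩ := Ideal.Quotient.mk_surjective (I := J₀) x
    have hmk : (Ideal.Quotient.mk J₀) (c • a) = 0 := by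
      rw [← hcx]
      exact (map_smul (Ideal.Quotient.mkₐ R J₀) c a).symm
    have hmem : c • a ∈ J₀ := Ideal.Quotient.eq_zero_iff_mem.mp hmk
    have hfmem : c • (f.toRingHom a) ∈ I := by
      have := Ideal.mem_comap.mp hmem
      rwa [show f.toRingHom (c • a) = c • f.toRingHom a from map_smul f c a] at this
    have : f.toRingHom a ∈ I := smul_mem_ideal K I hc hfmem
    exact Ideal.Quotient.eq_zero_iff_mem.mpr (Ideal.mem_comap.mpr this)
  refine ⟨flat_of_torsionFree, ?_, ?_⟩
  · -- map f J₀ = I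
    apply le_antisymm Ideal.map_comap_le
    intro x hx
    obtain ⟨r, hr, a, ha⟩ := exists_denom K x
    have hrx : r • x ∈ I := by
      rw [Algebra.smul_def]
      exact I.mul_mem_left _ hx
    have hmem : a ∈ J₀ := by
      rw [hJ₀, Ideal.mem_comap, hfa, ← ha]
      exact hrx
    apply smul_mem_ideal K _ hr
    rw [ha, ← hfa]
    exact Ideal.mem_map_of_mem _ hmem
  · -- uniqueness
    intro J hJflat hJmap
    apply le_antisymm
    · intro a haJ
      exact Ideal.mem_comap.mpr (hJmap ▸ Ideal.mem_map_of_mem _ haJ)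
    · intro a ha
      have hfa' : f.toRingHom a ∈ Ideal.map f.toRingHom J := by
        rw [hJmap]; exact Ideal.mem_comap.mp ha
      -- every element of map f J is, after clearing denominators, f of an element of J
      have claim : ∀ x ∈ Ideal.map f.toRingHom J,
          ∃ r : R, r ≠ 0 ∧ ∃ b ∈ J, r • x = f.toRingHom b := by
        intro x hx
        rw [Ideal.map] at hx
        refine Submodule.span_induction ?_ ?_ ?_ ?_ hx
        · rintro _ ⟨b, hbJ, rfl⟩
          exact ⟨1, one_ne_zero, b, hbJ, one_smul _ _⟩
        · exact ⟨1, one_ne_zero, 0, J.zero_mem, by simp⟩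
        · rintro x y _ _ ⟨r, hr, b, hbJ, hrb⟩ ⟨s, hs, c, hcJ, hsc⟩
          have hsmulJ : ∀ (t : R) {d : A}, d ∈ J → t • d ∈ J := by
            intro t d hd
            rw [Algebra.smul_def]
            exact J.mul_mem_left _ hd
          refine ⟨r * s, mul_ne_zero hr hs, s • b + r • c, ?_, ?_⟩
          · exact J.add_mem (hsmulJ s hbJ) (hsmulJ r hcJ)
          · rw [map_add, smul_add]
            have h1 : (r * s) • x = s • (r • x) := by rw [mul_comm, mul_smul]
            have h2 : (r * s) • y = r • (s • y) := by rw [mul_smul]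
            rw [h1, h2, hrb, hsc]
            simp only [hfa]
            simp [tmul_smul]
        · rintro c x _ ⟨r, hr, b, hbJ, hrb⟩
          obtain ⟨s, hs, a', ha'⟩ := exists_denom K c
          refine ⟨s * r, mul_ne_zero hs hr, a' * b, J.mul_mem_left a' hbJ, ?_⟩
          have key : (s * r) • (c • x) = (s • c) * (r • x) := by
            rw [smul_eq_mul, Algebra.smul_def, Algebra.smul_def, Algebra.smul_def, map_mul]
            ring
          rw [key, ha', hrb, hfa, map_mul, hfa, hfa]
      obtain ⟨r, hr, b, hbJ, hrb⟩ := claim _ hfa'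
      have : f.toRingHom (r • a) = f.toRingHom b := by
        rw [show f.toRingHom (r • a) = r • f.toRingHom a from map_smul f r a, hrb]
      have hra : r • a = b := includeRight_inj K this
      have hmk : r • (Ideal.Quotient.mk J a) = 0 := by
        have h5 := map_smul (Ideal.Quotient.mkₐ R J) r a
        rw [Ideal.Quotient.mkₐ_eq_mk] at h5
        rw [← h5]
        exact Ideal.Quotient.eq_zero_iff_mem.mpr (hra ▸ hbJ)
      have hzero : (fun m : A ⧸ J => r • m) (Ideal.Quotient.mk J a)
          = (fun m : A ⧸ J => r • m) 0 := by simpa using hmk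
      have : (Ideal.Quotient.mk J a) = 0 := smul_inj_of_flat hr hzero
      exact Ideal.Quotient.eq_zero_iff_mem.mp this
end

section
/- Let K be a field with valuation v, M = ℤⁿ, and Δ a polyhedron in ℝⁿ. Define K[M]^Δ = { Σ_u α_u χ^u ∈ K[M] : v(α_u) + ⟨u, ω⟩ ≥ 0 for all ω ∈ Δ and all u with α_u ≠ 0 }. Then K[M]^Δ is integrally closed in K[M]: if f ∈ K[M] satisfies a monic polynomial equation f^m + a_{m-1}f^{m-1} + ⋯ + a_0 = 0 with all a_i ∈ K[M]^Δ, and Δ is a polytope (so K[M]^Δ = ∩_{ω vertex} K[M]^ω), then f ∈ K[M]^Δ. -/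
open scoped BigOperators

/-- The `ω`-weight `v_ω(f) = min_{u ∈ supp f} (v(f_u) + ⟨u, ω⟩)` of a Laurent polynomial. -/
noncomputable def omegaWeight {K : Type*} [Field K] {n : ℕ} (v : K → WithTop ℝ)
    (ω : Fin n → ℝ) (f : AddMonoidAlgebra K (Fin n → ℤ)) : WithTop ℝ :=
  (Finsupp.support f.coeff).inf fun u =>
    v (f.coeff u) + (((∑ i, (u i : ℝ) * ω i) : ℝ) : WithTop ℝ)

/-!
For a vertex `ω`, the weight `v_ω` is itself a valuation on `K[M]`: it is ultrametric termwise,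
and it is multiplicative because the coefficient of `f * g` at `d + e`, where `d` and `e` are the
lexicographically largest exponents at which `f` and `g` attain their weights, has a unique summand
of minimal valuation. Hence `{h : v_ω(h) ≥ 0}` is the ring of integers of a valuation, which is
integrally closed; a monic equation with coefficients in `K[M]^Δ ⊆ K[M]^ω` then forces `v_ω(f) ≥ 0`.
-/

namespace AddValuation

variable {R Γ : Type*}

section Ring

variable [Ring R] [LinearOrderedAddCommMonoidWithTop Γ] (w : AddValuation R Γ)

theorem le_map_sum_add {ι : Type*} {s : Finset ι} {f : ι → R} {c t : Γ}
    (hf : ∀ i ∈ s, c ≤ w (f i) + t) : c ≤ w (∑ i ∈ s, f i) + t := by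
  refine Finset.sum_induction f (fun x => c ≤ w x + t) (fun x y hx hy => ?_) (by simp) hf
  exact (min_add_add_right (w x) (w y) t ▸ le_min hx hy).trans (add_le_add_left (w.map_add x y) t)

theorem map_sum_eq_of_lt {ι : Type*} [DecidableEq ι] {s : Finset ι} {f : ι → R} {j : ι}
    (hj : j ∈ s) (hf : ∀ i ∈ s \ {j}, w (f j) < w (f i)) : w (∑ i ∈ s, f i) = w (f j) :=
  (toValuation w).map_sum_eq_of_lt hj hf

end Ring

variable [CommRing R] [LinearOrderedAddCommGroupWithTop Γ] (w : AddValuation R Γ)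

theorem toValuation_le_one_iff {x : R} : toValuation w x ≤ 1 ↔ 0 ≤ w x := by
  rw [toValuation_apply, ← ofAdd_zero, Multiplicative.ofAdd_le, ← toDual_zero,
    OrderDual.toDual_le_toDual]

open Polynomial in
theorem nonneg_of_monic_eq_zero {x : R} {m : ℕ} (a : Fin m → R) (ha : ∀ i, 0 ≤ w (a i))
    (hx : x ^ m + ∑ i, a i * x ^ (i : ℕ) = 0) : 0 ≤ w x := by
  let O := (toValuation w).integer
  let p : O[X] := ∑ i : Fin m, C ⟨a i, (w.toValuation_le_one_iff).2 (ha i)⟩ * X ^ (i : ℕ)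
  have hp : p.degree < m := by
    refine (degree_sum_le _ _).trans_lt
      ((Finset.sup_lt_iff (WithBot.bot_lt_coe m)).2 fun i _ => ?_)
    exact (degree_C_mul_X_pow_le _ _).trans_lt (WithBot.coe_lt_coe.2 i.isLt)
  have hint : IsIntegral O x := ⟨_, monic_X_pow_add hp, by
    simp only [eval₂_add, eval₂_X_pow, eval₂_finsetSum, eval₂_mul, eval₂_C, p]; exact hx⟩
  exact (w.toValuation_le_one_iff).1
    ((Valuation.integer.integers _).isIntegral_iff_v_le_one.1 hint)

end AddValuation

section OmegaValuation

variable {K : Type*} [Field K] {n : ℕ}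

def omegaPairing (ω : Fin n → ℝ) : (Fin n → ℤ) →+ ℝ where
  toFun u := ∑ i, (u i : ℝ) * ω i
  map_zero' := by simp
  map_add' u u' := by simp [add_mul, Finset.sum_add_distrib]

def omegaTermWeight (v : K → WithTop ℝ) (ω : Fin n → ℝ) (f : AddMonoidAlgebra K (Fin n → ℤ))
    (u : Fin n → ℤ) : WithTop ℝ :=
  v (f.coeff u) + (omegaPairing ω u : WithTop ℝ)

variable (w : AddValuation K (WithTop ℝ)) (ω : Fin n → ℝ) (f g : AddMonoidAlgebra K (Fin n → ℤ))

theorem omegaWeight_eq_inf : omegaWeight w ω f = f.coeff.support.inf (omegaTermWeight w ω f) := rfl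

theorem omegaTermWeight_eq_top_iff {u : Fin n → ℤ} :
    omegaTermWeight w ω f u = ⊤ ↔ f.coeff u = 0 := by
  simp [omegaTermWeight]

theorem le_omegaWeight_iff {c : WithTop ℝ} :
    c ≤ omegaWeight w ω f ↔ ∀ u, c ≤ omegaTermWeight w ω f u := by
  refine ⟨fun h u => ?_, fun h => Finset.le_inf fun u _ => h u⟩
  by_cases hu : f.coeff u = 0
  · simp [(omegaTermWeight_eq_top_iff w ω f).2 hu]
  · exact h.trans (Finset.inf_le (Finsupp.mem_support_iff.2 hu))

theorem omegaWeight_le_omegaTermWeight (u : Fin n → ℤ) :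
    omegaWeight w ω f ≤ omegaTermWeight w ω f u :=
  (le_omegaWeight_iff w ω f).1 le_rfl u

theorem omegaWeight_ne_top {f : AddMonoidAlgebra K (Fin n → ℤ)} (hf : f ≠ 0) :
    omegaWeight w ω f ≠ ⊤ := by
  intro h
  refine hf (AddMonoidAlgebra.coeff_inj.1 (Finsupp.ext fun u => ?_))
  exact (omegaTermWeight_eq_top_iff w ω f).1
    (top_le_iff.1 (h ▸ omegaWeight_le_omegaTermWeight w ω f u))

theorem omegaWeight_zero : omegaWeight w ω (0 : AddMonoidAlgebra K (Fin n → ℤ)) = ⊤ := rfl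

theorem omegaWeight_one : omegaWeight w ω (1 : AddMonoidAlgebra K (Fin n → ℤ)) = 0 := by
  rw [omegaWeight_eq_inf, AddMonoidAlgebra.one_def]
  simp [omegaTermWeight]

theorem min_le_omegaWeight_add :
    min (omegaWeight w ω f) (omegaWeight w ω g) ≤ omegaWeight w ω (f + g) := by
  refine (le_omegaWeight_iff w ω _).2 fun u => ?_
  calc min (omegaWeight w ω f) (omegaWeight w ω g)
      ≤ min (omegaTermWeight w ω f u) (omegaTermWeight w ω g u) :=
        min_le_min (omegaWeight_le_omegaTermWeight w ω f u) (omegaWeight_le_omegaTermWeight w ω g u)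
    _ ≤ omegaTermWeight w ω (f + g) u := by
        simp only [omegaTermWeight, min_add_add_right, AddMonoidAlgebra.coeff_add,
          Finsupp.add_apply]
        exact add_le_add_left (w.map_add _ _) _

theorem omegaTermWeight_mul_summand (x u : Fin n → ℤ) :
    w (f.coeff x * g.coeff (-x + u)) + (omegaPairing ω u : WithTop ℝ) =
      omegaTermWeight w ω f x + omegaTermWeight w ω g (-x + u) := by
  have hu : omegaPairing ω u = omegaPairing ω x + omegaPairing ω (-x + u) := by
    rw [← map_add, add_neg_cancel_left]
  rw [hu, WithTop.coe_add, w.map_mul]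
  exact add_add_add_comm _ _ _ _

theorem add_le_omegaWeight_mul :
    omegaWeight w ω f + omegaWeight w ω g ≤ omegaWeight w ω (f * g) := by
  refine (le_omegaWeight_iff w ω _).2 fun u => ?_
  rw [omegaTermWeight, AddMonoidAlgebra.coeff_mul_apply_left, Finsupp.sum]
  refine w.le_map_sum_add fun x _ => ?_
  rw [omegaTermWeight_mul_summand]
  exact add_le_add (omegaWeight_le_omegaTermWeight w ω f x) (omegaWeight_le_omegaTermWeight w ω g _)

theorem exists_lexMax_omegaTermWeight_eq {f : AddMonoidAlgebra K (Fin n → ℤ)} (hf : f ≠ 0) :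
    ∃ d, omegaTermWeight w ω f d = omegaWeight w ω f ∧
      ∀ x, omegaTermWeight w ω f x = omegaWeight w ω f → toLex x ≤ toLex d := by
  have hne : f.coeff.support.Nonempty :=
    Finsupp.support_nonempty_iff.2 fun h => hf (AddMonoidAlgebra.coeff_inj.1 h)
  obtain ⟨d₀, hd₀, hd₀min⟩ := Finset.exists_mem_eq_inf _ hne (omegaTermWeight w ω f)
  obtain ⟨d, hd, hdmax⟩ := (f.coeff.support.filter
    (omegaTermWeight w ω f · = omegaWeight w ω f)).exists_max_image toLex
      ⟨d₀, Finset.mem_filter.2 ⟨hd₀, hd₀min.symm⟩⟩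
  refine ⟨d, (Finset.mem_filter.1 hd).2, fun x hx => hdmax x (Finset.mem_filter.2 ⟨?_, hx⟩)⟩
  refine Finsupp.mem_support_iff.2 fun h0 => omegaWeight_ne_top w ω hf ?_
  rwa [← hx, omegaTermWeight_eq_top_iff]

theorem omegaWeight_mul_le :
    omegaWeight w ω (f * g) ≤ omegaWeight w ω f + omegaWeight w ω g := by
  rcases eq_or_ne f 0 with rfl | hf
  · simp [omegaWeight_zero]
  rcases eq_or_ne g 0 with rfl | hg
  · simp [omegaWeight_zero]
  obtain ⟨d, hdw, hdmax⟩ := exists_lexMax_omegaTermWeight_eq w ω hf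
  obtain ⟨e, hew, hemax⟩ := exists_lexMax_omegaTermWeight_eq w ω hg
  let T x := f.coeff x * g.coeff (-x + (d + e))
  have hTd : w (T d) + (omegaPairing ω (d + e) : WithTop ℝ) =
      omegaWeight w ω f + omegaWeight w ω g := by
    rw [omegaTermWeight_mul_summand, neg_add_cancel_left, hdw, hew]
  have hT : ∀ x ∈ f.coeff.support \ {d}, w (T d) < w (T x) := by
    intro x hx
    rw [← WithTop.add_lt_add_iff_right WithTop.coe_ne_top, hTd, omegaTermWeight_mul_summand]
    rcases (omegaWeight_le_omegaTermWeight w ω f x).lt_or_eq with hx' | hx'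
    · exact WithTop.add_lt_add_of_lt_of_le (omegaWeight_ne_top w ω hg) hx'
        (omegaWeight_le_omegaTermWeight w ω g _)
    rcases (omegaWeight_le_omegaTermWeight w ω g (-x + (d + e))).lt_or_eq with hy' | hy'
    · exact WithTop.add_lt_add_of_le_of_lt (omegaWeight_ne_top w ω hf) hx'.le hy'
    -- both `x` and `-x + (d + e)` are initial exponents, so lex-maximality of `d`, `e` forces `x = d`
    have hxd := ((add_eq_add_iff_eq_and_eq (hdmax x hx'.symm) (hemax _ hy'.symm)).1
      (congrArg toLex (add_neg_cancel_left x (d + e)))).1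
    exact ((Finset.mem_sdiff.1 hx).2 (Finset.mem_singleton.2 (toLex.injective hxd))).elim
  have hd : d ∈ f.coeff.support := by
    refine Finsupp.mem_support_iff.2 fun h0 => omegaWeight_ne_top w ω hf ?_
    rwa [← hdw, omegaTermWeight_eq_top_iff]
  calc omegaWeight w ω (f * g) ≤ omegaTermWeight w ω (f * g) (d + e) :=
        omegaWeight_le_omegaTermWeight w ω _ _
    _ = omegaWeight w ω f + omegaWeight w ω g := by
        rw [omegaTermWeight, AddMonoidAlgebra.coeff_mul_apply_left, Finsupp.sum,
          w.map_sum_eq_of_lt hd hT, hTd]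

theorem omegaWeight_mul : omegaWeight w ω (f * g) = omegaWeight w ω f + omegaWeight w ω g :=
  (omegaWeight_mul_le w ω f g).antisymm (add_le_omegaWeight_mul w ω f g)

noncomputable def omegaValuation : AddValuation (AddMonoidAlgebra K (Fin n → ℤ)) (WithTop ℝ) :=
  AddValuation.of (omegaWeight w ω) (omegaWeight_zero w ω) (omegaWeight_one w ω)
    (min_le_omegaWeight_add w ω) (omegaWeight_mul w ω)

end OmegaValuation

theorem stmt4_general {K : Type*} [Field K] {n : ℕ}
    (v : K → WithTop ℝ)
    (hv0 : ∀ α : K, v α = ⊤ ↔ α = 0)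
    (hvmul : ∀ α β : K, v (α * β) = v α + v β)
    (hvadd : ∀ α β : K, min (v α) (v β) ≤ v (α + β))
    (S : Finset (Fin n → ℝ))
    (f : AddMonoidAlgebra K (Fin n → ℤ)) (m : ℕ)
    (a : Fin m → AddMonoidAlgebra K (Fin n → ℤ))
    (ha : ∀ i : Fin m, ∀ ω ∈ S, (0 : WithTop ℝ) ≤ omegaWeight v ω (a i))
    (heq : f ^ m + ∑ i : Fin m, a i * f ^ (i : ℕ) = 0) :
    ∀ ω ∈ S, (0 : WithTop ℝ) ≤ omegaWeight v ω f := by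
  have hv1 : v 1 = 0 := by
    have h := hvmul 1 1
    rw [mul_one] at h
    lift v 1 to ℝ using (hv0 1).not.2 one_ne_zero with r
    norm_cast at h ⊢
    linarith
  let w : AddValuation K (WithTop ℝ) := AddValuation.of v ((hv0 0).2 rfl) hv1 hvadd hvmul
  intro ω hω
  exact (omegaValuation w ω).nonneg_of_monic_eq_zero a (fun i => ha i ω hω) heq

/-- `K[M]^Δ` is integrally closed in `K[M]` for a polytope `Δ`:  if `Δ` is given by its
(finite, nonempty) vertex set `S`, so that `K[M]^Δ = ⋂_{ω ∈ S} K[M]^ω`, and `f ∈ K[M]`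
satisfies a monic equation `f^m + a_{m-1} f^{m-1} + ⋯ + a_0 = 0` with all
`a_i ∈ K[M]^Δ`, then `f ∈ K[M]^Δ`. -/
theorem stmt4 {K : Type*} [Field K] {n : ℕ}
    (v : K → WithTop ℝ)
    (hv0 : ∀ α : K, v α = ⊤ ↔ α = 0)
    (hvmul : ∀ α β : K, v (α * β) = v α + v β)
    (hvadd : ∀ α β : K, min (v α) (v β) ≤ v (α + β))
    (S : Finset (Fin n → ℝ)) (hS : S.Nonempty)
    (f : AddMonoidAlgebra K (Fin n → ℤ)) (m : ℕ) (hm : 0 < m)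
    (a : Fin m → AddMonoidAlgebra K (Fin n → ℤ))
    (ha : ∀ i : Fin m, ∀ ω ∈ S, (0 : WithTop ℝ) ≤ omegaWeight v ω (a i))
    (heq : f ^ m + ∑ i : Fin m, a i * f ^ (i : ℕ) = 0) :
    ∀ ω ∈ S, (0 : WithTop ℝ) ≤ omegaWeight v ω f :=
  stmt4_general v hv0 hvmul hvadd S f m a ha heq
end

section
/- Let K be a field with a non-archimedean valuation v whose value group Γ = v(K*) is dense in ℝ, and let ω ∈ ℝ \ Γ. Then the K°-algebra A = { f = Σ_u α_u x^u ∈ K[x, x^{-1}] : v(α_u) + u·ω ≥ 0 for all u } is not finitely generated as a K°-algebra. -/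
/-!
For `δ > 0` let `A_δ ⊆ A` consist of the `f` with `v(α_u) + uω ≥ δ` whenever `-uω ∉ Γ`.
Since `Γ` is closed under addition, `A_δ` is a subring, and it contains `K°`. A generator
`g ∈ A` has `v(α_u) + uω > 0` at every `u` with `-uω ∉ Γ` (equality would put `-uω = v(α_u)`
in `Γ`), so a finite set of generators lies in `A_δ` for small `δ`. But by density there is
`α` with `ω < v(α) < ω + δ`, and then `α x⁻¹ ∈ A \ A_δ` because `ω ∉ Γ`.
-/

open Filter Topology AddMonoidAlgebra

namespace AddValuation

variable {R : Type*} [Ring R] (v : AddValuation R (WithTop ℝ))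

def valueSubmonoid : AddSubmonoid ℝ where
  carrier := {r | ∃ α, v α = r}
  zero_mem' := ⟨1, v.map_one⟩
  add_mem' := by
    rintro _ _ ⟨α, hα⟩ ⟨β, hβ⟩
    exact ⟨α * β, by rw [v.map_mul, hα, hβ, WithTop.coe_add]⟩

end AddValuation

lemma WithTop.coe_neg_le_iff_nonneg_add {x : WithTop ℝ} {t : ℝ} :
    ((-t : ℝ) : WithTop ℝ) ≤ x ↔ 0 ≤ x + t := by
  induction x with
  | top => simp
  | coe r => norm_cast; constructor <;> intro h <;> linarith

section CoeffBound

variable {R M : Type*} [Ring R] (v : AddValuation R (WithTop ℝ))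

def coeffBoundSubring [AddMonoid M] (c : M → ℝ) (hc0 : c 0 ≤ 0)
    (hc : ∀ a b, c (a + b) ≤ c a + c b) : Subring (AddMonoidAlgebra R M) where
  carrier := {f | ∀ m, (c m : WithTop ℝ) ≤ v (f.coeff m)}
  zero_mem' m := by simp
  one_mem' m := by
    classical
    rw [one_def, coeff_single, Finsupp.single_apply]
    split_ifs with h
    · subst h; simpa using hc0
    · simp
  add_mem' {f g} hf hg m := by
    rw [coeff_add, Finsupp.add_apply]
    exact v.map_le_add (hf m) (hg m)
  neg_mem' {f} hf m := by
    rw [coeff_neg, Finsupp.neg_apply, v.map_neg]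
    exact hf m
  mul_mem' {f g} hf hg m := by
    classical
    rw [coeff_mul]
    refine v.map_le_sum fun a _ => v.map_le_sum fun b _ => ?_
    dsimp only
    split_ifs with hab
    · subst hab
      rw [v.map_mul]
      exact (WithTop.coe_le_coe.2 (hc a b)).trans (by push_cast; exact add_le_add (hf a) (hg b))
    · simp

variable {v}

lemma forall_coe_le_coeff_single_iff {c : M → ℝ} {a : M} {α : R} :
    (∀ m, (c m : WithTop ℝ) ≤ v ((single a α).coeff m)) ↔ (c a : WithTop ℝ) ≤ v α := by
  classical
  refine ⟨fun h => by simpa using h a, fun h m => ?_⟩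
  rw [coeff_single, Finsupp.single_apply]
  split_ifs with ham
  · exact ham ▸ h
  · simp

lemma single_zero_mem_coeffBoundSubring [AddMonoid M] {c : M → ℝ} {hc0 : c 0 ≤ 0}
    {hc : ∀ a b, c (a + b) ≤ c a + c b} {α : R} (hα : 0 ≤ v α) :
    single 0 α ∈ coeffBoundSubring v c hc0 hc :=
  forall_coe_le_coeff_single_iff.2 ((WithTop.coe_le_coe.2 hc0).trans hα)

lemma forall_coe_le_iff_forall_mem_support {c : M → ℝ} {f : AddMonoidAlgebra R M} :
    (∀ m, (c m : WithTop ℝ) ≤ v (f.coeff m)) ↔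
      ∀ m ∈ f.coeff.support, (c m : WithTop ℝ) ≤ v (f.coeff m) := by
  refine ⟨fun h m _ => h m, fun h m => ?_⟩
  by_cases hm : m ∈ f.coeff.support
  · exact h m hm
  · simp [Finsupp.notMem_support_iff.1 hm]

end CoeffBound

lemma map_one_eq_zero_of_map_mul {R : Type*} [MulOneClass R] {v : R → WithTop ℝ} (h1 : v 1 ≠ ⊤)
    (hmul : ∀ a b, v (a * b) = v a + v b) : v 1 = 0 := by
  refine (WithTop.add_left_inj h1).1 ?_
  rw [add_zero, ← hmul, one_mul]

section PenalizedWeight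

variable {M : Type*} [AddMonoid M] (Γ : AddSubmonoid ℝ) (φ : M →+ ℝ)

open scoped Classical in
/-- For `φ u = -uω` and `Γ` the value set, this coefficient bound cuts out `A_δ`. -/
noncomputable def penalizedWeight (δ : ℝ) (m : M) : ℝ := φ m + if φ m ∈ Γ then 0 else δ

lemma penalizedWeight_zero (δ : ℝ) : penalizedWeight Γ φ δ 0 = 0 := by
  simp [penalizedWeight, Γ.zero_mem]

lemma penalizedWeight_of_notMem {δ : ℝ} {m : M} (hm : φ m ∉ Γ) :
    penalizedWeight Γ φ δ m = φ m + δ := by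
  simp [penalizedWeight, hm]

lemma penalizedWeight_add_le {δ : ℝ} (hδ : 0 ≤ δ) (a b : M) :
    penalizedWeight Γ φ δ (a + b) ≤ penalizedWeight Γ φ δ a + penalizedWeight Γ φ δ b := by
  unfold penalizedWeight
  rw [map_add]
  split_ifs with hab ha hb hb ha hb <;> first | linarith | exact absurd (Γ.add_mem ha hb) hab

variable {Γ} {R : Type*} [Ring R] {v : AddValuation R (WithTop ℝ)}

lemma eventually_penalizedWeight_le {f : AddMonoidAlgebra R M}
    (hf : ∀ m, (φ m : WithTop ℝ) ≤ v (f.coeff m)) :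
    ∀ᶠ δ in 𝓝 0, ∀ m, (penalizedWeight v.valueSubmonoid φ δ m : WithTop ℝ) ≤ v (f.coeff m) := by
  refine ((eventually_all_finset f.coeff.support).2 fun m _ => ?_).mono
    fun δ h => forall_coe_le_iff_forall_mem_support.2 h
  unfold penalizedWeight
  split_ifs with hm
  · exact .of_forall fun _ => by simpa using hf m
  cases hv : v (f.coeff m) with
  | top => simp
  | coe r =>
    have hlt : φ m < r := (WithTop.coe_le_coe.1 (hv ▸ hf m)).lt_of_ne
      fun h => hm ⟨_, hv.trans (congrArg _ h.symm)⟩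
    filter_upwards [eventually_lt_nhds (sub_pos.2 hlt)] with δ hδ
    exact WithTop.coe_le_coe.2 (by linarith)

lemma exists_pos_forall_penalizedWeight_le (s : Finset (AddMonoidAlgebra R M))
    (hs : ∀ f ∈ s, ∀ m, (φ m : WithTop ℝ) ≤ v (f.coeff m)) :
    ∃ δ > 0, ∀ f ∈ s, ∀ m, (penalizedWeight v.valueSubmonoid φ δ m : WithTop ℝ) ≤ v (f.coeff m) :=
  ((((eventually_all_finset s).2 fun f hf => eventually_penalizedWeight_le φ (hs f hf)).filter_mono
    nhdsWithin_le_nhds).and (self_mem_nhdsWithin (s := Set.Ioi 0))).exists.imp fun _ h => ⟨h.2, h.1⟩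

end PenalizedWeight

/-- Let `K` be a field with a non-archimedean valuation `v` whose value group
`Γ = v(K^×)` is dense in `ℝ`, and let `ω ∈ ℝ \ Γ`.  Then the `K°`-algebra
`A = { f = Σ α_u x^u ∈ K[x,x⁻¹] : v(α_u) + u·ω ≥ 0 ∀ u }` is not finitely generated
over `K°`:  there is no finite subset `s` of `A` such that `A` is contained in the
subring generated by `s` together with the constants from `K°`. -/
theorem stmt5 {K : Type*} [Field K]
    (v : K → WithTop ℝ)
    (hv0 : ∀ α : K, v α = ⊤ ↔ α = 0)
    (hvmul : ∀ α β : K, v (α * β) = v α + v β)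
    (hvadd : ∀ α β : K, min (v α) (v β) ≤ v (α + β))
    (hdense : Dense {r : ℝ | ∃ α : K, v α = (r : WithTop ℝ)})
    (ω : ℝ) (hω : ¬ ∃ α : K, v α = (ω : WithTop ℝ)) :
    ¬ ∃ s : Finset (AddMonoidAlgebra K ℤ),
        (∀ g ∈ s, ∀ u ∈ Finsupp.support g.coeff,
          (0 : WithTop ℝ) ≤ v (g.coeff u) + (((u : ℝ) * ω : ℝ) : WithTop ℝ)) ∧
        ∀ f : AddMonoidAlgebra K ℤ,
          (∀ u ∈ Finsupp.support f.coeff,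
            (0 : WithTop ℝ) ≤ v (f.coeff u) + (((u : ℝ) * ω : ℝ) : WithTop ℝ)) →
          f ∈ Subring.closure
            ((↑s : Set (AddMonoidAlgebra K ℤ)) ∪
              {g | ∃ α : K, (0 : WithTop ℝ) ≤ v α ∧
                g = AddMonoidAlgebra.single (0 : ℤ) α}) := by
  rintro ⟨s, hs, hA⟩
  let w : AddValuation K (WithTop ℝ) :=
    .of v ((hv0 0).2 rfl) (map_one_eq_zero_of_map_mul ((hv0 1).not.2 one_ne_zero) hvmul) hvadd hvmul
  let φ : ℤ →+ ℝ := (AddMonoidHom.mulRight (-ω)).comp (Int.castAddHom ℝ)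
  have hφ (f : AddMonoidAlgebra K ℤ) :
      (∀ u ∈ f.coeff.support, 0 ≤ v (f.coeff u) + (((u : ℝ) * ω : ℝ) : WithTop ℝ)) ↔
        ∀ u, (φ u : WithTop ℝ) ≤ w (f.coeff u) := by
    rw [forall_coe_le_iff_forall_mem_support]
    refine forall₂_congr fun u _ => ?_
    change _ ↔ (((u : ℝ) * -ω : ℝ) : WithTop ℝ) ≤ v (f.coeff u)
    rw [mul_neg, WithTop.coe_neg_le_iff_nonneg_add]
  obtain ⟨δ, hδ, hsδ⟩ := exists_pos_forall_penalizedWeight_le φ s fun g hg => (hφ g).1 (hs g hg)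
  let Aδ := coeffBoundSubring w (penalizedWeight w.valueSubmonoid φ δ)
    (penalizedWeight_zero _ _ δ).le (penalizedWeight_add_le _ _ hδ.le)
  have hclosure : Subring.closure (↑s ∪ {g | ∃ α, 0 ≤ v α ∧ g = single 0 α}) ≤ Aδ := by
    refine Subring.closure_le.2 ?_
    rintro g (hg | ⟨α, hα, rfl⟩)
    · exact hsδ g hg
    · exact single_zero_mem_coeffBoundSubring hα
  obtain ⟨r, ⟨α, hα⟩, hr⟩ :=
    hdense.exists_mem_open isOpen_Ioo (Set.nonempty_Ioo.2 (lt_add_of_pos_right ω hδ))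
  have hφ1 : φ (-1) = ω := by simp [φ]
  have hAδ : single (-1) α ∈ Aδ := hclosure <| hA _ <| (hφ _).2 <|
    forall_coe_le_coeff_single_iff.2 <| by
      rw [hφ1, AddValuation.of_apply, hα]; exact WithTop.coe_le_coe.2 hr.1.le
  have hle := forall_coe_le_coeff_single_iff.1 hAδ
  rw [penalizedWeight_of_notMem _ _ (hφ1 ▸ hω), hφ1, AddValuation.of_apply, hα] at hle
  exact (WithTop.coe_le_coe.1 hle).not_gt hr.2
end

section
/- Let K be a field with non-archimedean absolute value and X = Spec A an affine scheme of finite type over K. For every complete valued field (F,u) extending (K,v), the restriction map of multiplicative seminorms gives a continuous surjective map from (X_F)^an onto X^an. -/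
/-!
A point `q` of `X^an` has a prime kernel `𝔭`, and `q` is an absolute value on
`L = Frac (A ⧸ 𝔭)`. So it suffices to find a multiplicative nonarchimedean seminorm on `F ⊗[K] L`
restricting to the absolute values of `F` and of `L`, and to pull it back along
`F ⊗[K] A → F ⊗[K] L`.

Start from the projective tensor seminorm `P x = inf max_i |f i| |a i|` over all ways of writing
`x = ∑ f i ⊗ a i`. Ultrametric elimination makes the `a i` linearly independent over `K`
without raising the bound, which gives `P 1 = 1`. By Zorn there is a minimal seminorm `m ≤ P`
among the nonarchimedean ones with `m 1 = 1`, and minimality makes `m` multiplicative: its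
smoothing `lim m (x ^ n) ^ (1 / n)` and, for `m c ≠ 0`, `lim m (x * c ^ n) / m c ^ n` lie below it
in the same class. A valuation of a field dominated by another one equals it, so `m` restricts to
the given absolute values on `F` and `L`.
-/

open TensorProduct

/-- A multiplicative seminorm on the `K`-algebra `A` extending the absolute value `abs`. -/
def IsMultSeminorm {K A : Type*} [Field K] [CommRing A] [Algebra K A]
    (abs : K → ℝ) (p : A → ℝ) : Prop :=
  (∀ f, 0 ≤ p f) ∧
  (∀ f g, p (f * g) = p f * p g) ∧
  (∀ f g, p (f + g) ≤ max (p f) (p g)) ∧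
  (∀ α : K, p (algebraMap K A α) = abs α)

open scoped NNReal

namespace RingSeminorm

variable {R : Type*} [CommRing R]

instance : PartialOrder (RingSeminorm R) := PartialOrder.lift _ DFunLike.coe_injective

def IsNormalizedNonarch (p : RingSeminorm R) : Prop := p 1 = 1 ∧ IsNonarchimedean p

theorem exists_isNormalizedNonarch_le_of_isChain {c : Set (RingSeminorm R)}
    (hc : IsChain (· ≤ ·) c) (hne : c.Nonempty) (hcS : ∀ p ∈ c, IsNormalizedNonarch p) :
    ∃ g : RingSeminorm R, IsNormalizedNonarch g ∧ ∀ p ∈ c, g ≤ p := by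
  have : Nonempty c := hne.to_subtype
  let g : R → ℝ := fun x => ⨅ p : c, (p : RingSeminorm R) x
  have hg_nonneg (x : R) : 0 ≤ g x := le_ciInf fun p => apply_nonneg _ _
  have hg_le (p : c) (x : R) : g x ≤ (p : RingSeminorm R) x :=
    ciInf_le ⟨0, by rintro _ ⟨p, rfl⟩; exact apply_nonneg _ _⟩ p
  have hlow (p₁ p₂ : c) : ∃ p : c, (p : RingSeminorm R) ≤ p₁ ∧ (p : RingSeminorm R) ≤ p₂ := by
    rcases hc.total p₁.2 p₂.2 with h | h
    · exact ⟨p₁, le_rfl, h⟩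
    · exact ⟨p₂, h, le_rfl⟩
  have hg_na : IsNonarchimedean g := fun x y => by
    by_contra! hlt
    obtain ⟨p₁, hp₁⟩ := exists_lt_of_ciInf_lt ((le_max_left _ _).trans_lt hlt)
    obtain ⟨p₂, hp₂⟩ := exists_lt_of_ciInf_lt ((le_max_right _ _).trans_lt hlt)
    obtain ⟨p, hp₁', hp₂'⟩ := hlow p₁ p₂
    refine lt_irrefl (g (x + y)) ?_
    calc g (x + y) ≤ (p : RingSeminorm R) (x + y) := hg_le p _
      _ ≤ max ((p : RingSeminorm R) x) ((p : RingSeminorm R) y) := (hcS p p.2).2 x y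
      _ < g (x + y) := max_lt ((hp₁' x).trans_lt hp₁) ((hp₂' y).trans_lt hp₂)
  have hg_mul (x y : R) : g (x * y) ≤ g x * g y := by
    rw [Real.iInf_mul_of_nonneg (hg_nonneg y)]
    refine le_ciInf fun p₁ => ?_
    rw [Real.mul_iInf_of_nonneg (apply_nonneg _ _)]
    refine le_ciInf fun p₂ => ?_
    obtain ⟨p, hp₁, hp₂⟩ := hlow p₁ p₂
    calc g (x * y) ≤ (p : RingSeminorm R) (x * y) := hg_le p _
      _ ≤ (p : RingSeminorm R) x * (p : RingSeminorm R) y := map_mul_le_mul _ _ _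
      _ ≤ (p₁ : RingSeminorm R) x * (p₂ : RingSeminorm R) y :=
        mul_le_mul (hp₁ x) (hp₂ y) (apply_nonneg _ _) (apply_nonneg _ _)
  refine ⟨{ toFun := g
            map_zero' := by simp only [g, map_zero, ciInf_const]
            add_le' := fun x y =>
              (hg_na x y).trans (max_le_add_of_nonneg (hg_nonneg x) (hg_nonneg y))
            neg' := by simp only [g, map_neg_eq_map, implies_true]
            mul_le' := hg_mul }, ⟨?_, hg_na⟩, fun p hp x => hg_le ⟨p, hp⟩ x⟩
  show ⨅ p : c, (p : RingSeminorm R) 1 = 1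
  simp only [fun p : c => (hcS p p.2).1, ciInf_const]

theorem exists_minimal_le {P : RingSeminorm R} (hP : IsNormalizedNonarch P) :
    ∃ m ≤ P, Minimal IsNormalizedNonarch m := by
  obtain ⟨m, hmP, hm⟩ := zorn_le_nonempty₀ (α := (RingSeminorm R)ᵒᵈ)
    {p | IsNormalizedNonarch (OrderDual.ofDual p)} (fun c hcS hc p hp => by
      obtain ⟨g, hg, hgc⟩ := exists_isNormalizedNonarch_le_of_isChain (c := OrderDual.toDual ⁻¹' c)
        hc.symm ⟨p, hp⟩ hcS
      exact ⟨OrderDual.toDual g, hg, hgc⟩) (OrderDual.toDual P) hP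
  exact ⟨OrderDual.ofDual m, hmP, maximal_toDual.1 hm⟩

section Minimal

variable {m : RingSeminorm R} (hm : Minimal IsNormalizedNonarch m)
include hm

theorem isPowMul_of_minimal : IsPowMul m := by
  obtain ⟨hm1, hna⟩ := hm.1
  have hs1 : smoothingSeminorm m hm1.le hna 1 = 1 :=
    (smoothingSeminorm_apply_of_map_mul_eq_mul m hm1.le hna fun y => by
      rw [one_mul, hm1, one_mul]).trans hm1
  have h := hm.eq_of_le ⟨hs1, isNonarchimedean_smoothingFun m hm1.le hna⟩
    (smoothingFun_le_self m)
  rw [← h]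
  exact isPowMul_smoothingFun m hm1.le

theorem map_mul_of_minimal (x y : R) : m (x * y) = m x * m y := by
  obtain ⟨hm1, hna⟩ := hm.1
  rcases eq_or_ne (m x) 0 with hx | hx
  · refine le_antisymm ?_ (by rw [hx, zero_mul]; exact apply_nonneg _ _)
    simpa [hx] using map_mul_le_mul m x y
  · have hpm := isPowMul_of_minimal hm
    have h := hm.eq_of_le (y := seminormFromConst hm1.le hx hpm)
      ⟨seminormFromConst_one hm1.le hx hpm, seminormFromConst_isNonarchimedean hm1.le hx hpm hna⟩
      (seminormFromConst_le_seminorm hm1.le hx hpm)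
    have h' (z : R) : seminormFromConst' x m z = m z := DFunLike.congr_fun h z
    simpa only [h'] using seminormFromConst_const_mul hm1.le hx hpm y

end Minimal

end RingSeminorm

namespace Valuation

section OfReal

variable {R : Type*} [CommRing R]

def ofReal (p : R → ℝ) (hnonneg : ∀ x, 0 ≤ p x) (h0 : p 0 = 0) (h1 : p 1 = 1)
    (hmul : ∀ x y, p (x * y) = p x * p y) (hna : IsNonarchimedean p) : Valuation R ℝ≥0 where
  toFun x := ⟨p x, hnonneg x⟩
  map_zero' := NNReal.eq h0
  map_one' := NNReal.eq h1
  map_mul' x y := NNReal.eq (hmul x y)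
  map_add_le_max' x y := hna x y

@[simp]
theorem coe_ofReal (p : R → ℝ) (hnonneg h0 h1 hmul hna) (x : R) :
    (ofReal p hnonneg h0 h1 hmul hna x : ℝ) = p x :=
  rfl

end OfReal

theorem eq_of_forall_le {F Γ₀ : Type*} [Field F] [LinearOrderedCommGroupWithZero Γ₀]
    {v w : Valuation F Γ₀} (h : ∀ x, v x ≤ w x) : v = w := by
  ext x
  rcases eq_or_ne x 0 with rfl | hx
  · simp
  refine le_antisymm (h x) ?_
  have := h x⁻¹
  rwa [map_inv₀, map_inv₀, inv_le_inv₀ ((v.pos_iff).2 hx) ((w.pos_iff).2 hx)] at this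

variable {A Γ₀ : Type*} [CommRing A] [LinearOrderedCommGroupWithZero Γ₀] (v : Valuation A Γ₀)

noncomputable def toFractionRing : Valuation (FractionRing (A ⧸ v.supp)) Γ₀ :=
  (v.onQuot le_rfl).extendToLocalization (S := nonZeroDivisors (A ⧸ v.supp))
    (fun s hs => by
      rw [Ideal.mem_primeCompl_iff, supp_quot_supp, Submodule.zero_eq_bot, Ideal.mem_bot]
      exact nonZeroDivisors.ne_zero hs) _

@[simp]
theorem toFractionRing_algebraMap_mk (a : A) :
    v.toFractionRing (algebraMap _ _ (Ideal.Quotient.mk v.supp a)) = v a := by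
  rw [toFractionRing, extendToLocalization_apply_map_apply]
  rfl

end Valuation

section TensorBounds

variable {K F L : Type*} [CommRing K] [CommRing F] [CommRing L] [Algebra K F] [Algebra K L]
  (vF : Valuation F ℝ≥0) (vL : Valuation L ℝ≥0)

def tensorBounds (x : F ⊗[K] L) : Set ℝ≥0 :=
  {r | ∃ (n : ℕ) (f : Fin n → F) (a : Fin n → L),
    x = ∑ i, f i ⊗ₜ[K] a i ∧ ∀ i, vF (f i) * vL (a i) ≤ r}

variable {vF vL}

theorem zero_mem_tensorBounds_zero : (0 : ℝ≥0) ∈ tensorBounds vF vL (0 : F ⊗[K] L) :=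
  ⟨0, Fin.elim0, Fin.elim0, by simp, fun i => i.elim0⟩

theorem mul_mem_tensorBounds_tmul (f : F) (a : L) :
    vF f * vL a ∈ tensorBounds vF vL (f ⊗ₜ[K] a) :=
  ⟨1, fun _ => f, fun _ => a, by simp, fun _ => le_rfl⟩

theorem mem_tensorBounds_neg {x : F ⊗[K] L} {r : ℝ≥0} (hr : r ∈ tensorBounds vF vL x) :
    r ∈ tensorBounds vF vL (-x) := by
  obtain ⟨n, f, a, rfl, hfa⟩ := hr
  exact ⟨n, -f, a, by simp [neg_tmul], fun i => by simpa using hfa i⟩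

theorem max_mem_tensorBounds_add {x y : F ⊗[K] L} {r s : ℝ≥0} (hr : r ∈ tensorBounds vF vL x)
    (hs : s ∈ tensorBounds vF vL y) : max r s ∈ tensorBounds vF vL (x + y) := by
  obtain ⟨m, f, a, rfl, hfa⟩ := hr
  obtain ⟨n, g, b, rfl, hgb⟩ := hs
  refine ⟨m + n, Fin.append f g, Fin.append a b, by simp [Fin.sum_univ_add], fun i => ?_⟩
  refine Fin.addCases (fun i => ?_) (fun i => ?_) i
  · simpa using le_max_of_le_left (hfa i)
  · simpa using le_max_of_le_right (hgb i)

theorem mul_mem_tensorBounds_mul {x y : F ⊗[K] L} {r s : ℝ≥0} (hr : r ∈ tensorBounds vF vL x)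
    (hs : s ∈ tensorBounds vF vL y) : r * s ∈ tensorBounds vF vL (x * y) := by
  obtain ⟨m, f, a, rfl, hfa⟩ := hr
  obtain ⟨n, g, b, rfl, hgb⟩ := hs
  let e : Fin (m * n) ≃ Fin m × Fin n := finProdFinEquiv.symm
  refine ⟨m * n, fun i => f (e i).1 * g (e i).2, fun i => a (e i).1 * b (e i).2, ?_, fun i => ?_⟩
  · rw [Finset.sum_mul_sum, ← Finset.sum_product', ← e.symm.sum_comp]
    simp [e, Algebra.TensorProduct.tmul_mul_tmul]
  · calc vF (f (e i).1 * g (e i).2) * vL (a (e i).1 * b (e i).2)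
        = vF (f (e i).1) * vL (a (e i).1) * (vF (g (e i).2) * vL (b (e i).2)) := by
          simp only [map_mul]; ring
      _ ≤ r * s := mul_le_mul' (hfa _) (hgb _)

theorem tensorBounds_nonempty (x : F ⊗[K] L) : (tensorBounds vF vL x).Nonempty := by
  induction x using TensorProduct.induction_on with
  | zero => exact Set.nonempty_of_mem zero_mem_tensorBounds_zero
  | tmul f a => exact Set.nonempty_of_mem (mul_mem_tensorBounds_tmul f a)
  | add x y hx hy => exact Set.nonempty_of_mem (max_mem_tensorBounds_add hx.some_mem hy.some_mem)

variable (vF vL) in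
noncomputable def tensorNorm (x : F ⊗[K] L) : ℝ≥0 := ⨅ r : tensorBounds vF vL x, (r : ℝ≥0)

theorem tensorNorm_le {x : F ⊗[K] L} {r : ℝ≥0} (hr : r ∈ tensorBounds vF vL x) :
    tensorNorm vF vL x ≤ r :=
  ciInf_le (OrderBot.bddBelow _) (⟨r, hr⟩ : tensorBounds vF vL x)

theorem tensorNorm_neg_le (x : F ⊗[K] L) : tensorNorm vF vL (-x) ≤ tensorNorm vF vL x :=
  have := (tensorBounds_nonempty (vF := vF) (vL := vL) x).to_subtype
  le_ciInf fun r => tensorNorm_le (mem_tensorBounds_neg r.2)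

theorem tensorNorm_add_le (x y : F ⊗[K] L) :
    tensorNorm vF vL (x + y) ≤ max (tensorNorm vF vL x) (tensorNorm vF vL y) := by
  have := (tensorBounds_nonempty (vF := vF) (vL := vL) x).to_subtype
  have := (tensorBounds_nonempty (vF := vF) (vL := vL) y).to_subtype
  by_contra! hlt
  obtain ⟨r, hr⟩ := exists_lt_of_ciInf_lt ((le_max_left _ _).trans_lt hlt)
  obtain ⟨s, hs⟩ := exists_lt_of_ciInf_lt ((le_max_right _ _).trans_lt hlt)
  exact (tensorNorm_le (max_mem_tensorBounds_add r.2 s.2)).not_gt (max_lt hr hs)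

theorem tensorNorm_mul_le (x y : F ⊗[K] L) :
    tensorNorm vF vL (x * y) ≤ tensorNorm vF vL x * tensorNorm vF vL y := by
  have := (tensorBounds_nonempty (vF := vF) (vL := vL) x).to_subtype
  have := (tensorBounds_nonempty (vF := vF) (vL := vL) y).to_subtype
  exact NNReal.le_iInf_mul fun r => NNReal.le_mul_iInf fun s =>
    tensorNorm_le (mul_mem_tensorBounds_mul r.2 s.2)

theorem tensorNorm_tmul_le (f : F) (a : L) : tensorNorm vF vL (f ⊗ₜ[K] a) ≤ vF f * vL a :=
  tensorNorm_le (mul_mem_tensorBounds_tmul f a)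

variable (vF vL) in
noncomputable def tensorSeminorm : RingSeminorm (F ⊗[K] L) where
  toFun x := tensorNorm vF vL x
  map_zero' := by simpa using tensorNorm_le (zero_mem_tensorBounds_zero (vF := vF) (vL := vL))
  add_le' x y := by
    exact_mod_cast (tensorNorm_add_le x y).trans (max_le_add_of_nonneg bot_le bot_le)
  neg' x := by
    exact_mod_cast le_antisymm (tensorNorm_neg_le x) (by simpa using tensorNorm_neg_le (-x))
  mul_le' x y := by exact_mod_cast tensorNorm_mul_le x y

end TensorBounds

section Fields

variable {K F L : Type*} [Field K] [Field F] [Field L] [Algebra K F] [Algebra K L]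
  {vF : Valuation F ℝ≥0} {vL : Valuation L ℝ≥0}
  (hK : ∀ k : K, vF (algebraMap K F k) = vL (algebraMap K L k))
include hK

theorem exists_shorter_of_not_linearIndependent {n : ℕ} (f : Fin (n + 1) → F)
    (a : Fin (n + 1) → L) (ha : ¬ LinearIndependent K a) {r : ℝ≥0}
    (hr : ∀ i, vF (f i) * vL (a i) ≤ r) :
    ∃ (f' : Fin n → F) (a' : Fin n → L), ∑ j, f' j ⊗ₜ[K] a' j = ∑ i, f i ⊗ₜ[K] a i ∧
      ∀ j, vF (f' j) * vL (a' j) ≤ r := by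
  classical
  obtain ⟨g, hg, i₁, hi₁⟩ := Fintype.not_linearIndependent_iff.1 ha
  obtain ⟨i₀, hi₀, hmax⟩ := Finset.exists_max_image (Finset.univ.filter fun i => g i ≠ 0)
    (fun i => vL (g i • a i)) ⟨i₁, by simpa using hi₁⟩
  have hg₀ : g i₀ ≠ 0 := (Finset.mem_filter.1 hi₀).2
  have hmax' (i : Fin (n + 1)) : vL (g i • a i) ≤ vL (g i₀ • a i₀) := by
    by_cases hgi : g i = 0
    · simp [hgi]
    · exact hmax i (by simpa using hgi)
  -- Solving `∑ g i • a i = 0` for `a i₀`, with `i₀` maximizing `vL (g i • a i)`, removes the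
  -- `i₀`-th term without raising the bound.
  let c : Fin n → K := fun j => g (i₀.succAbove j) / g i₀
  let a' : Fin n → L := fun j => a (i₀.succAbove j)
  have hrel : ∑ j, c j • a' j = -a i₀ := by
    rw [Fin.sum_univ_succAbove _ i₀, add_eq_zero_iff_eq_neg'] at hg
    simp only [c, a', div_eq_inv_mul, mul_smul, ← Finset.smul_sum, hg, smul_neg,
      inv_smul_smul₀ hg₀]
  have hc (j : Fin n) : vL (c j • a' j) ≤ vL (a i₀) := by
    have e : c j • a' j = (g i₀)⁻¹ • (g (i₀.succAbove j) • a' j) := by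
      simp only [c, div_eq_inv_mul, mul_smul]
    rw [e, ← inv_smul_smul₀ hg₀ (a i₀), Algebra.smul_def, Algebra.smul_def (g i₀)⁻¹, map_mul,
      map_mul]
    exact mul_le_mul_right (hmax' _) _
  refine ⟨fun j => f (i₀.succAbove j) - f i₀ * algebraMap K F (c j), a', ?_, fun j => ?_⟩
  · have e (j : Fin n) : (f (i₀.succAbove j) - f i₀ * algebraMap K F (c j)) ⊗ₜ[K] a' j =
        f (i₀.succAbove j) ⊗ₜ[K] a' j - f i₀ ⊗ₜ[K] (c j • a' j) := by
      rw [sub_tmul, mul_comm, ← Algebra.smul_def, smul_tmul]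
    simp only [e, Finset.sum_sub_distrib, ← tmul_sum, hrel, tmul_neg, sub_neg_eq_add,
      Fin.sum_univ_succAbove _ i₀, a']
    exact add_comm _ _
  · calc vF (f (i₀.succAbove j) - f i₀ * algebraMap K F (c j)) * vL (a' j)
        ≤ max (vF (f (i₀.succAbove j))) (vF (f i₀ * algebraMap K F (c j))) * vL (a' j) :=
          mul_le_mul_left (vF.map_sub _ _) _
      _ = max (vF (f (i₀.succAbove j)) * vL (a' j)) (vF (f i₀) * vL (c j • a' j)) := by
          rw [max_mul_of_nonneg _ _ bot_le, map_mul, Algebra.smul_def, map_mul, hK, mul_assoc]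
      _ ≤ r := max_le (hr _) ((mul_le_mul_right (hc j) _).trans (hr i₀))

theorem exists_linearIndependent_of_mem_tensorBounds {x : F ⊗[K] L} {r : ℝ≥0}
    (hr : r ∈ tensorBounds vF vL x) :
    ∃ (n : ℕ) (f : Fin n → F) (a : Fin n → L), x = ∑ i, f i ⊗ₜ[K] a i ∧
      LinearIndependent K a ∧ ∀ i, vF (f i) * vL (a i) ≤ r := by
  obtain ⟨n, f, a, rfl, hfa⟩ := hr
  induction n with
  | zero => exact ⟨0, f, a, rfl, linearIndependent_empty_type, hfa⟩
  | succ n ih =>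
    by_cases ha : LinearIndependent K a
    · exact ⟨_, f, a, rfl, ha, hfa⟩
    obtain ⟨f', a', hsum, hf'a'⟩ := exists_shorter_of_not_linearIndependent hK f a ha hfa
    rw [← hsum]
    exact ih f' a' hf'a'

theorem exists_one_le_of_linearIndependent {n : ℕ} {f : Fin n → F} {a : Fin n → L}
    (ha : LinearIndependent K a) (hsum : ∑ i, f i ⊗ₜ[K] a i = 1) :
    ∃ i, 1 ≤ vF (f i) * vL (a i) := by
  have h1 : (1 : L) ∈ Submodule.span K (Set.range a) := by
    by_contra h
    have hli := Module.Flat.linearIndependent_one_tmul (S := F)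
      (linearIndependent_finCons.2 ⟨ha, h⟩)
    have := Fintype.linearIndependent_iff.1 hli (Fin.cons (-1) f) (by
      simp [Fin.sum_univ_succ, smul_tmul', hsum, Algebra.TensorProduct.one_def, neg_tmul])
    simpa using this 0
  obtain ⟨k, hk⟩ := (Submodule.mem_span_range_iff_exists_fun K).1 h1
  have hfk : ∀ i, f i = algebraMap K F (k i) := by
    have e (i : Fin n) : (f i - algebraMap K F (k i)) • ((1 : F) ⊗ₜ[K] a i) =
        f i ⊗ₜ[K] a i - (1 : F) ⊗ₜ[K] (k i • a i) := by
      rw [smul_tmul', smul_eq_mul, mul_one, sub_tmul, Algebra.algebraMap_eq_smul_one, smul_tmul]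
    have := Fintype.linearIndependent_iff.1 (Module.Flat.linearIndependent_one_tmul (S := F) ha)
      (fun i => f i - algebraMap K F (k i)) (by
        simp only [e, Finset.sum_sub_distrib, ← tmul_sum, hk, hsum, Algebra.TensorProduct.one_def,
          sub_self])
    exact fun i => sub_eq_zero.1 (this i)
  by_contra! hlt
  have : vL (∑ i, k i • a i) < 1 := vL.map_sum_lt one_ne_zero fun i _ => by
    simpa [Algebra.smul_def, ← hK, ← hfk] using hlt i
  simp [hk] at this

theorem one_le_of_mem_tensorBounds_one {r : ℝ≥0} (hr : r ∈ tensorBounds vF vL (1 : F ⊗[K] L)) :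
    1 ≤ r := by
  obtain ⟨n, f, a, hsum, ha, hfa⟩ := exists_linearIndependent_of_mem_tensorBounds hK hr
  obtain ⟨i, hi⟩ := exists_one_le_of_linearIndependent hK ha hsum.symm
  exact hi.trans (hfa i)

theorem tensorNorm_one : tensorNorm vF vL (1 : F ⊗[K] L) = 1 := by
  have := (tensorBounds_nonempty (vF := vF) (vL := vL) (1 : F ⊗[K] L)).to_subtype
  refine le_antisymm ?_ (le_ciInf fun r => one_le_of_mem_tensorBounds_one hK r.2)
  simpa [Algebra.TensorProduct.one_def] using
    tensorNorm_tmul_le (vF := vF) (vL := vL) (1 : F) (1 : L)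

end Fields

theorem exists_valuation_tensorProduct {K F L : Type*} [Field K] [Field F] [Field L]
    [Algebra K F] [Algebra K L] {vF : Valuation F ℝ≥0} {vL : Valuation L ℝ≥0}
    (hK : ∀ k : K, vF (algebraMap K F k) = vL (algebraMap K L k)) :
    ∃ w : Valuation (F ⊗[K] L) ℝ≥0, (∀ f, w (f ⊗ₜ[K] 1) = vF f) ∧ ∀ a, w (1 ⊗ₜ[K] a) = vL a := by
  obtain ⟨m, hmP, hm⟩ := RingSeminorm.exists_minimal_le (P := tensorSeminorm vF vL)
    ⟨congrArg NNReal.toReal (tensorNorm_one hK), fun x y => by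
      exact_mod_cast tensorNorm_add_le x y⟩
  let w := Valuation.ofReal m (apply_nonneg m) (map_zero m) hm.1.1
    (RingSeminorm.map_mul_of_minimal hm) hm.1.2
  have hw (f : F) (a : L) : w (f ⊗ₜ[K] a) ≤ vF f * vL a := by
    rw [← NNReal.coe_le_coe, Valuation.coe_ofReal]
    exact (hmP _).trans (by exact_mod_cast tensorNorm_tmul_le f a)
  refine ⟨w, fun f => ?_, fun a => ?_⟩
  · have := Valuation.eq_of_forall_le (v := w.comap Algebra.TensorProduct.includeLeftRingHom)
      (w := vF) fun f => by simpa using hw f 1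
    exact congrArg (· f) this
  · have := Valuation.eq_of_forall_le
      (v := w.comap (Algebra.TensorProduct.includeRight (R := K) (A := F)).toRingHom)
      (w := vL) fun a => by simpa using hw 1 a
    exact congrArg (· a) this

theorem exists_valuation_baseChange {K F A : Type*} [Field K] [Field F] [Algebra K F] [CommRing A]
    [Algebra K A] {vF : Valuation F ℝ≥0} {v : Valuation A ℝ≥0}
    (hK : ∀ k : K, vF (algebraMap K F k) = v (algebraMap K A k)) :
    ∃ w : Valuation (F ⊗[K] A) ℝ≥0, (∀ f, w (f ⊗ₜ[K] 1) = vF f) ∧ ∀ a, w (1 ⊗ₜ[K] a) = v a := by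
  let ψ : A →ₐ[K] FractionRing (A ⧸ v.supp) :=
    (IsScalarTower.toAlgHom K (A ⧸ v.supp) _).comp (Ideal.Quotient.mkₐ K v.supp)
  have hψ (a : A) : v.toFractionRing (ψ a) = v a := v.toFractionRing_algebraMap_mk a
  obtain ⟨w, hwF, hwL⟩ := exists_valuation_tensorProduct (vF := vF) (vL := v.toFractionRing)
    fun k => by rw [← ψ.commutes, hψ, hK]
  refine ⟨w.comap (Algebra.TensorProduct.lTensor (S := F) F ψ).toRingHom, fun f => ?_,
    fun a => ?_⟩
  · simpa using hwF f
  · simpa [hψ] using hwL (ψ a)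

theorem IsMultSeminorm.comp_algHom {K F A B : Type*} [Field K] [Field F] [Algebra K F]
    [CommRing A] [Algebra K A] [CommRing B] [Algebra F B] [Algebra K B] [IsScalarTower K F B]
    {absK : K → ℝ} {absF : F → ℝ} {p : B → ℝ} (hp : IsMultSeminorm absF p)
    (hext : ∀ α, absF (algebraMap K F α) = absK α) (φ : A →ₐ[K] B) :
    IsMultSeminorm absK (p ∘ φ) := by
  obtain ⟨hnonneg, hmul, hna, halg⟩ := hp
  refine ⟨fun x => hnonneg _, fun x y => ?_, fun x y => ?_, fun α => ?_⟩
  · simp only [Function.comp_apply, map_mul, hmul]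
  · simpa only [Function.comp_apply, map_add] using hna _ _
  · rw [Function.comp_apply, φ.commutes, IsScalarTower.algebraMap_apply K F B, halg, hext]

theorem Valuation.isMultSeminorm_coe {K B : Type*} [Field K] [CommRing B] [Algebra K B]
    {abs : K → ℝ} (w : Valuation B ℝ≥0) (h : ∀ α, (w (algebraMap K B α) : ℝ) = abs α) :
    IsMultSeminorm abs fun x => (w x : ℝ) :=
  ⟨fun x => (w x).2, fun x y => by simp, fun x y => by exact_mod_cast w.map_add x y, h⟩

theorem stmt10_general {K F A : Type*} [Field K] [Field F] [Algebra K F]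
    [CommRing A] [Algebra K A]
    (absK : K → ℝ) (absF : F → ℝ)
    (hF_nonneg : ∀ α, 0 ≤ absF α) (hF_zero : ∀ α, absF α = 0 ↔ α = 0)
    (hF_mul : ∀ α β, absF (α * β) = absF α * absF β)
    (hF_add : ∀ α β, absF (α + β) ≤ max (absF α) (absF β))
    (hext : ∀ α : K, absF (algebraMap K F α) = absK α) :
    Continuous (fun (p : (F ⊗[K] A) → ℝ) =>
        (fun a : A => p (Algebra.TensorProduct.includeRight a)) : ((F ⊗[K] A) → ℝ) → (A → ℝ)) ∧
    Set.MapsTo (fun (p : (F ⊗[K] A) → ℝ) => fun a : A => p (Algebra.TensorProduct.includeRight a))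
      {p | IsMultSeminorm absF p} {q | IsMultSeminorm absK q} ∧
    Set.SurjOn (fun (p : (F ⊗[K] A) → ℝ) => fun a : A => p (Algebra.TensorProduct.includeRight a))
      {p | IsMultSeminorm absF p} {q | IsMultSeminorm absK q} := by
  have h0 : absF 0 = 0 := (hF_zero 0).2 rfl
  have h1 : absF 1 = 1 :=
    (mul_eq_left₀ ((hF_zero 1).not.2 one_ne_zero)).1 (by simpa using (hF_mul 1 1).symm)
  refine ⟨continuous_pi fun a => continuous_apply _, fun p hp => hp.comp_algHom hext _,
    fun q hq => ?_⟩
  obtain ⟨hq_nonneg, hq_mul, hq_na, hq_alg⟩ := hq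
  have hqK (k : K) : q (algebraMap K A k) = absF (algebraMap K F k) :=
    (hq_alg k).trans (hext k).symm
  let vF := Valuation.ofReal absF hF_nonneg h0 h1 hF_mul hF_add
  let v := Valuation.ofReal q hq_nonneg (by simpa [h0] using hqK 0) (by simpa [h1] using hqK 1)
    hq_mul hq_na
  obtain ⟨w, hwF, hwA⟩ :=
    exists_valuation_baseChange (vF := vF) (v := v) fun k => NNReal.eq (hqK k).symm
  refine ⟨fun x => (w x : ℝ), w.isMultSeminorm_coe fun α => ?_, funext fun a => ?_⟩
  · exact congrArg NNReal.toReal (hwF α)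
  · exact congrArg NNReal.toReal (hwA a)

/-- Let `X = Spec A` be affine of finite type over `K` and let `(F, abs_F)` be a complete
valued field extending `(K, abs_K)`.  Then the restriction of seminorms along
`A → F ⊗[K] A` gives a continuous surjective map `(X_F)^an → X^an` (both spaces carry the
topology of pointwise convergence). -/
theorem stmt10 {K F A : Type*} [Field K] [Field F] [Algebra K F]
    [CommRing A] [Algebra K A]
    (hA : Algebra.FiniteType K A)
    (absK : K → ℝ) (absF : F → ℝ)
    (hK_nonneg : ∀ α, 0 ≤ absK α) (hK_zero : ∀ α, absK α = 0 ↔ α = 0)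
    (hK_mul : ∀ α β, absK (α * β) = absK α * absK β)
    (hK_add : ∀ α β, absK (α + β) ≤ max (absK α) (absK β))
    (hF_nonneg : ∀ α, 0 ≤ absF α) (hF_zero : ∀ α, absF α = 0 ↔ α = 0)
    (hF_mul : ∀ α β, absF (α * β) = absF α * absF β)
    (hF_add : ∀ α β, absF (α + β) ≤ max (absF α) (absF β))
    (hext : ∀ α : K, absF (algebraMap K F α) = absK α)
    -- completeness of F with respect to abs_F
    (hcomplete : ∀ s : ℕ → F,
      (∀ ε : ℝ, 0 < ε → ∃ N : ℕ, ∀ m ≥ N, ∀ k ≥ N, absF (s m - s k) < ε) →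
      ∃ a : F, ∀ ε : ℝ, 0 < ε → ∃ N : ℕ, ∀ m ≥ N, absF (s m - a) < ε) :
    Continuous (fun (p : (F ⊗[K] A) → ℝ) =>
        (fun a : A => p (Algebra.TensorProduct.includeRight a)) : ((F ⊗[K] A) → ℝ) → (A → ℝ)) ∧
    Set.MapsTo (fun (p : (F ⊗[K] A) → ℝ) => fun a : A => p (Algebra.TensorProduct.includeRight a))
      {p | IsMultSeminorm absF p} {q | IsMultSeminorm absK q} ∧
    Set.SurjOn (fun (p : (F ⊗[K] A) → ℝ) => fun a : A => p (Algebra.TensorProduct.includeRight a))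
      {p | IsMultSeminorm absF p} {q | IsMultSeminorm absK q} :=
  stmt10_general absK absF hF_nonneg hF_zero hF_mul hF_add hext
end

section
/- Let Δ be a pointed Γ-rational polyhedron in ℝⁿ with recession cone σ, and let p be a multiplicative seminorm on K[σ̌ ∩ M] extending |·| on K. Then p(f) ≤ 1 for all f ∈ K[M]^Δ if and only if trop_v(p) ∈ Δ, where trop_v(p) ∈ ℝⁿ is defined by ⟨u, trop_v(p)⟩ = −log p(χ^u) for u ∈ ℤⁿ. -/
/-!
Since `p` is multiplicative and every monomial `χ^u` is a unit, `u ↦ log p(χ^u)` is additive,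
so `−log p(α χ^u) = v(α) + ⟨u, trop_v(p)⟩`: a monomial has `p ≤ 1` exactly when
`v(α) + ⟨u, trop_v(p)⟩ ≥ 0`. If `trop_v(p) ∈ Δ`, every term of `f ∈ K[M]^Δ` therefore has
`p ≤ 1`, hence so has `f` by the ultrametric inequality. Conversely, `Γ`-rationality writes each
defining inequality of `Δ` as `v(α_i) + ⟨u_i, ω⟩ ≥ 0`; this puts `α_i χ^{u_i}` in `K[M]^Δ`, and
`p(α_i χ^{u_i}) ≤ 1` says that `trop_v(p)` satisfies the inequality.
-/

open scoped BigOperators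

/-- A pointed set: it contains no affine line. -/
def IsPointedSet {n : ℕ} (Δ : Set (Fin n → ℝ)) : Prop :=
  ∀ p d : Fin n → ℝ, d ≠ 0 → ¬ ∀ t : ℝ, p + t • d ∈ Δ

/-- A `Γ`-rational polyhedron, where `Γ = {−log |α| : α ∈ K^×}` is the value group of the
absolute value `abs`. -/
def IsGRatPolyhedronAbs {K : Type*} [Field K] {n : ℕ} (abs : K → ℝ)
    (Δ : Set (Fin n → ℝ)) : Prop :=
  ∃ (N : ℕ) (u : Fin N → (Fin n → ℤ)) (c : Fin N → ℝ),
    (∀ i, ∃ α : K, α ≠ 0 ∧ - Real.log (abs α) = c i) ∧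
    Δ = {ω | ∀ i, 0 ≤ (∑ j, (u i j : ℝ) * ω j) + c i}

/-- Membership in `K[M]^Δ`: every term `α_u χ^u` of `f` satisfies
`v(α_u) + ⟨u,ω⟩ ≥ 0` for all `ω ∈ Δ`, where `v = −log abs`. -/
def MemPolRing {K : Type*} [Field K] {n : ℕ} (abs : K → ℝ) (Δ : Set (Fin n → ℝ))
    (f : AddMonoidAlgebra K (Fin n → ℤ)) : Prop :=
  ∀ u ∈ Finsupp.support f.coeff, ∀ ω ∈ Δ,
    0 ≤ - Real.log (abs (f.coeff u)) + ∑ j, (u j : ℝ) * ω j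

open AddMonoidAlgebra

section MultiplicativeMap

variable {K M : Type*} [Field K] [AddGroup M] {p : AddMonoidAlgebra K M → ℝ}

theorem map_one_of_map_mul (hp_mul : ∀ f g, p (f * g) = p f * p g) (h1 : p 1 ≠ 0) :
    p 1 = 1 := by
  have h := hp_mul 1 1
  rw [one_mul] at h
  exact (mul_eq_left₀ h1).mp h.symm

theorem map_single_one_ne_zero (hp_mul : ∀ f g, p (f * g) = p f * p g) (h1 : p 1 ≠ 0)
    (u : M) : p (single u 1) ≠ 0 := by
  have h := hp_mul (single u 1) (single (-u) 1)
  rw [single_mul_single, add_neg_cancel, one_mul, ← one_def,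
    map_one_of_map_mul hp_mul h1] at h
  exact left_ne_zero_of_mul_eq_one h.symm

theorem map_single_eq_mul (hp_mul : ∀ f g, p (f * g) = p f * p g) (u : M) (α : K) :
    p (single u α) = p (single 0 α) * p (single u 1) := by
  rw [← hp_mul, single_mul_single, zero_add, mul_one]

noncomputable def logMonomialHom (hp_mul : ∀ f g, p (f * g) = p f * p g) (h1 : p 1 ≠ 0) :
    M →+ ℝ :=
  AddMonoidHom.mk' (fun u => Real.log (p (single u 1))) fun u v => by
    rw [← Real.log_mul (map_single_one_ne_zero hp_mul h1 u) (map_single_one_ne_zero hp_mul h1 v),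
      ← hp_mul, single_mul_single, one_mul]

end MultiplicativeMap

theorem AddMonoidHom.eq_sum_mul_map_single {n : ℕ} (F : (Fin n → ℤ) →+ ℝ) (u : Fin n → ℤ) :
    F u = ∑ j, (u j : ℝ) * F (Pi.single j 1) := by
  conv_lhs => rw [← Finset.univ_sum_single u]
  rw [map_sum]
  refine Finset.sum_congr rfl fun j _ => ?_
  rw [← zsmul_eq_mul, ← map_zsmul, ← Pi.single_smul, smul_eq_mul, mul_one]

section Tropicalization

variable {K : Type*} [Field K] {n : ℕ} {p : AddMonoidAlgebra K (Fin n → ℤ) → ℝ}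

noncomputable def tropPoint (p : AddMonoidAlgebra K (Fin n → ℤ) → ℝ) : Fin n → ℝ :=
  fun i => - Real.log (p (single (Pi.single i 1) 1))

theorem neg_log_map_single (hp_mul : ∀ f g, p (f * g) = p f * p g) (h1 : p 1 ≠ 0)
    (u : Fin n → ℤ) {α : K} (hα : p (single 0 α) ≠ 0) :
    - Real.log (p (single u α)) =
      - Real.log (p (single 0 α)) + ∑ j, (u j : ℝ) * tropPoint p j := by
  have hlog := (logMonomialHom hp_mul h1).eq_sum_mul_map_single u
  simp only [logMonomialHom, AddMonoidHom.mk'_apply] at hlog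
  rw [map_single_eq_mul hp_mul, Real.log_mul hα (map_single_one_ne_zero hp_mul h1 u), hlog]
  simp only [tropPoint, mul_neg, Finset.sum_neg_distrib, neg_add]

theorem map_single_le_one_iff (hp_nonneg : ∀ f, 0 ≤ p f)
    (hp_mul : ∀ f g, p (f * g) = p f * p g) (h1 : p 1 ≠ 0)
    (u : Fin n → ℤ) {α : K} (hα : p (single 0 α) ≠ 0) :
    p (single u α) ≤ 1 ↔
      0 ≤ - Real.log (p (single 0 α)) + ∑ j, (u j : ℝ) * tropPoint p j := by
  rw [← neg_log_map_single hp_mul h1 u hα, neg_nonneg, Real.log_nonpos_iff (hp_nonneg _)]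

end Tropicalization

theorem map_le_of_forall_map_single_le {K M : Type*} [Semiring K] {p : AddMonoidAlgebra K M → ℝ}
    (hp_add : ∀ f g, p (f + g) ≤ max (p f) (p g)) {c : ℝ} (hp_zero : p 0 ≤ c)
    (f : AddMonoidAlgebra K M) (hf : ∀ u ∈ f.coeff.support, p (single u (f.coeff u)) ≤ c) :
    p f ≤ c := by
  rw [← f.sum_coeff_single]
  exact Finset.sum_induction _ (fun g => p g ≤ c)
    (fun g h hg hh => (hp_add g h).trans (max_le hg hh)) hp_zero hf

theorem memPolRing_single {K : Type*} [Field K] {n : ℕ} {abs : K → ℝ} {Δ : Set (Fin n → ℝ)}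
    {u : Fin n → ℤ} {α : K} (h : ∀ ω ∈ Δ, 0 ≤ - Real.log (abs α) + ∑ j, (u j : ℝ) * ω j) :
    MemPolRing abs Δ (single u α) := by
  intro v hv
  obtain rfl : v = u := by simpa using Finsupp.support_single_subset hv
  simpa using h

theorem stmt12_general {K : Type*} [Field K] {n : ℕ}
    (abs : K → ℝ)
    (habs_zero : ∀ α, abs α = 0 ↔ α = 0)
    (Δ : Set (Fin n → ℝ))
    (hΔrat : IsGRatPolyhedronAbs abs Δ)
    (p : AddMonoidAlgebra K (Fin n → ℤ) → ℝ)
    (hp_nonneg : ∀ f, 0 ≤ p f)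
    (hp_mul : ∀ f g, p (f * g) = p f * p g)
    (hp_add : ∀ f g, p (f + g) ≤ max (p f) (p g))
    (hp_ext : ∀ α : K, p (AddMonoidAlgebra.single (0 : Fin n → ℤ) α) = abs α) :
    (∀ f : AddMonoidAlgebra K (Fin n → ℤ), MemPolRing abs Δ f → p f ≤ 1) ↔
      (fun i => - Real.log (p (AddMonoidAlgebra.single (Pi.single i 1 : Fin n → ℤ) (1 : K))))
        ∈ Δ := by
  have h1 : p 1 ≠ 0 := by rw [one_def, hp_ext, Ne, habs_zero]; exact one_ne_zero
  have hp_const : ∀ {α : K}, α ≠ 0 → p (single 0 α) ≠ 0 := fun hα => by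
    rwa [hp_ext, Ne, habs_zero]
  change _ ↔ tropPoint p ∈ Δ
  constructor
  · intro h
    obtain ⟨N, U, c, hc, rfl⟩ := hΔrat
    intro i
    obtain ⟨α, hα0, hαc⟩ := hc i
    have hle := h (single (U i) α) <|
      memPolRing_single fun ω hω => by simpa only [hαc, add_comm] using hω i
    have hi := (map_single_le_one_iff hp_nonneg hp_mul h1 (U i) (hp_const hα0)).mp hle
    rwa [hp_ext, hαc, add_comm] at hi
  · intro htrop f hf
    refine map_le_of_forall_map_single_le hp_add ?_ f fun u hu => ?_
    · rw [← single_zero 0, hp_ext, (habs_zero 0).mpr rfl]; exact zero_le_one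
    · rw [map_single_le_one_iff hp_nonneg hp_mul h1 u
        (hp_const (Finsupp.mem_support_iff.mp hu)), hp_ext]
      exact hf u hu _ htrop

/-- Let `Δ` be a pointed `Γ`-rational (nonempty) polyhedron and let `p` be a multiplicative
seminorm on the Laurent polynomial ring extending `abs` (a point of `T^an`).  Then
`p(f) ≤ 1` for all `f ∈ K[M]^Δ` if and only if `trop_v(p) ∈ Δ`, where the coordinates of
`trop_v(p)` are `−log p(χ^{e_i})`. -/
theorem stmt12 {K : Type*} [Field K] {n : ℕ}
    (abs : K → ℝ)
    (habs_nonneg : ∀ α, 0 ≤ abs α)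
    (habs_zero : ∀ α, abs α = 0 ↔ α = 0)
    (habs_mul : ∀ α β, abs (α * β) = abs α * abs β)
    (habs_add : ∀ α β, abs (α + β) ≤ max (abs α) (abs β))
    (Δ : Set (Fin n → ℝ))
    (hΔrat : IsGRatPolyhedronAbs abs Δ)
    (hΔpt : IsPointedSet Δ)
    (hΔne : Δ.Nonempty)
    (p : AddMonoidAlgebra K (Fin n → ℤ) → ℝ)
    (hp_nonneg : ∀ f, 0 ≤ p f)
    (hp_mul : ∀ f g, p (f * g) = p f * p g)
    (hp_add : ∀ f g, p (f + g) ≤ max (p f) (p g))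
    (hp_ext : ∀ α : K, p (AddMonoidAlgebra.single (0 : Fin n → ℤ) α) = abs α) :
    (∀ f : AddMonoidAlgebra K (Fin n → ℤ), MemPolRing abs Δ f → p f ≤ 1) ↔
      (fun i => - Real.log (p (AddMonoidAlgebra.single (Pi.single i 1 : Fin n → ℤ) (1 : K))))
        ∈ Δ :=
  stmt12_general abs habs_zero Δ hΔrat p hp_nonneg hp_mul hp_add hp_ext
end

section
/- Let f : ℝⁿ → ℝ ∪ {∞} be a proper polyhedral function (its epigraph is a nonempty polyhedron) and f*(u) := sup{⟨u,ω⟩ − f(ω) : ω ∈ ℝⁿ} its conjugate. Then f* is again a proper polyhedral function and f** = f. -/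
open scoped BigOperators

/-- The epigraph of `f : ℝⁿ → ℝ ∪ {±∞}` inside `ℝⁿ × ℝ`. -/
def epiSet {n : ℕ} (f : (Fin n → ℝ) → EReal) : Set ((Fin n → ℝ) × ℝ) :=
  {p | f p.1 ≤ (p.2 : EReal)}

/-- `f` is a proper polyhedral function:  it takes values in `ℝ ∪ {∞}` (never `−∞`) and
its epigraph is a nonempty polyhedron in `ℝⁿ × ℝ`. -/
def IsProperPolyhedralFn {n : ℕ} (f : (Fin n → ℝ) → EReal) : Prop :=
  (∀ ω, f ω ≠ ⊥) ∧ (epiSet f).Nonempty ∧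
  ∃ (N : ℕ) (u : Fin N → (Fin n → ℝ)) (b : Fin N → ℝ) (c : Fin N → ℝ),
    epiSet f = {p | ∀ i, c i ≤ (∑ j, u i j * p.1 j) + b i * p.2}

/-- The conjugate `f*(u) = sup_ω (⟨u,ω⟩ − f(ω))` of a function `f : ℝⁿ → ℝ ∪ {±∞}`. -/
noncomputable def conjFn {n : ℕ} (f : (Fin n → ℝ) → EReal) : (Fin n → ℝ) → EReal :=
  fun u => ⨆ ω : Fin n → ℝ, (((∑ j, u j * ω j : ℝ) : EReal) - f ω)

/-!
Write `epi f = {(ω, s) | c ≤ U ω + s b}`. By the affine Farkas lemma, `f*(v) ≤ t` holds exactly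
when some `z ≥ 0` has `zᵀU = -v`, `z ⬝ b = 1` and `-t ≤ z ⬝ c`, so `epi f*` is the projection
of a polyhedron and hence a polyhedron (Fourier–Motzkin elimination). Every such `z` also gives
an affine minorant `ω ↦ z ⬝ (c - U ω)` of `f` lying below `f**`, and if `(ω, t) ∉ epi f` then
some inequality of the system is violated at `(ω, t)`, which produces a `z` whose minorant
exceeds `t` at `ω`; hence `f ≤ f**`, while `f** ≤ f` always holds.
-/

open Matrix Filter Topology

lemma exists_between_of_finite {α β : Type*} [Finite α] [Finite β] (l : α → ℝ) (r : β → ℝ)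
    (h : ∀ a b, l a ≤ r b) : ∃ t, (∀ a, l a ≤ t) ∧ ∀ b, t ≤ r b := by
  cases isEmpty_or_nonempty α with
  | inl _ => exact ⟨⨅ b, r b, isEmptyElim, ciInf_le (Finite.bddBelow_range r)⟩
  | inr _ => exact ⟨⨆ a, l a, le_ciSup (Finite.bddAbove_range l), fun b => ciSup_le (h · b)⟩

lemma exists_le_smul_of_combinations_nonpos {ι : Type*} [Finite ι] {α g : ι → ℝ}
    (hzero : ∀ i, α i = 0 → g i ≤ 0)
    (hpair : ∀ p q, 0 < α p → α q < 0 → -α q * g p + α p * g q ≤ 0) :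
    ∃ t : ℝ, g ≤ t • α := by
  obtain ⟨t, hlow, hup⟩ := exists_between_of_finite
    (fun p : {p // 0 < α p} => g p / α p) (fun q : {q // α q < 0} => g q / α q)
    fun ⟨p, hp⟩ ⟨q, hq⟩ => by
      rw [← neg_div_neg_eq (g q), div_le_div_iff₀ hp (neg_pos.2 hq)]
      linarith [hpair p q hp hq]
  refine ⟨t, fun i => ?_⟩
  rcases lt_trichotomy (α i) 0 with hneg | hzero' | hpos
  · have := hup ⟨i, hneg⟩
    rw [le_div_iff_of_neg hneg] at this
    simpa [mul_comm] using this
  · simpa [hzero'] using hzero i hzero'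
  · have := hlow ⟨i, hpos⟩
    rw [div_le_iff₀ hpos] at this
    simpa [mul_comm] using this

theorem fourierMotzkin_step {ι : Type} [Fintype ι] (α : ι → ℝ) :
    ∃ (κ : Type) (_ : Fintype κ) (Y : Matrix κ ι ℝ),
      (∀ k, 0 ≤ Y k) ∧ Y *ᵥ α = 0 ∧ ∀ g, Y *ᵥ g ≤ 0 → ∃ t : ℝ, g ≤ t • α := by
  classical
  let Y : Matrix ({i // α i = 0} ⊕ {pq : ι × ι // 0 < α pq.1 ∧ α pq.2 < 0}) ι ℝ :=
    Sum.elim (fun i => Pi.single i.1 1)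
      fun pq => (-α pq.1.2) • Pi.single pq.1.1 1 + α pq.1.1 • Pi.single pq.1.2 1
  have hY : ∀ g, Y *ᵥ g = Sum.elim (fun i : {i // α i = 0} => g i)
      fun pq : {pq : ι × ι // _} => -α pq.1.2 * g pq.1.1 + α pq.1.1 * g pq.1.2 := by
    intro g
    ext k
    change Y k ⬝ᵥ g = _
    rcases k with i | pq <;> simp [Y, add_dotProduct, smul_dotProduct, single_dotProduct]
  refine ⟨_, inferInstance, Y, ?_, ?_, fun g hg => exists_le_smul_of_combinations_nonpos ?_ ?_⟩
  · rintro (i | ⟨⟨p, q⟩, hp, hq⟩)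
    · exact Pi.single_nonneg.2 zero_le_one
    · exact add_nonneg (smul_nonneg (by linarith) (Pi.single_nonneg.2 zero_le_one))
        (smul_nonneg hp.le (Pi.single_nonneg.2 zero_le_one))
  · rw [hY]
    ext (i | pq)
    · exact i.2
    · simp only [Sum.elim_inr, Pi.zero_apply]
      ring
  · intro i hi
    simpa [hY] using hg (.inl ⟨i, hi⟩)
  · intro p q hp hq
    simpa [hY] using hg (.inr ⟨(p, q), hp, hq⟩)

lemma mul_row_nonneg {κ μ ι : Type} [Fintype μ] {Y₂ : Matrix κ μ ℝ} {Y₁ : Matrix μ ι ℝ}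
    (h₂ : ∀ k, 0 ≤ Y₂ k) (h₁ : ∀ l, 0 ≤ Y₁ l) (k : κ) : 0 ≤ (Y₂ * Y₁) k :=
  fun i => Finset.sum_nonneg fun l _ => mul_nonneg (h₂ k l) (h₁ l i)

theorem fourierMotzkin {K : Type} [Fintype K] {ι : Type} [Fintype ι] (W : Matrix ι K ℝ) :
    ∃ (κ : Type) (_ : Fintype κ) (Y : Matrix κ ι ℝ),
      (∀ k, 0 ≤ Y k) ∧ Y * W = 0 ∧ ∀ g, Y *ᵥ g ≤ 0 → ∃ w, g ≤ W *ᵥ w := by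
  classical
  revert ι
  refine Fintype.induction_empty_option (P := fun K _ => ∀ {ι : Type} [Fintype ι]
    (W : Matrix ι K ℝ), ∃ (κ : Type) (_ : Fintype κ) (Y : Matrix κ ι ℝ),
      (∀ k, 0 ≤ Y k) ∧ Y * W = 0 ∧ ∀ g, Y *ᵥ g ≤ 0 → ∃ w, g ≤ W *ᵥ w) ?_ ?_ ?_ K
  · intro K K' _ e ih ι _ W
    obtain ⟨κ, _, Y, hY0, hYW, hY⟩ := ih (W.submatrix id e)
    refine ⟨κ, inferInstance, Y, hY0, ?_, fun g hg => ?_⟩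
    · ext k j
      simpa [mul_apply] using congr_fun (congr_fun hYW k) (e.symm j)
    · obtain ⟨w, hw⟩ := hY g hg
      exact ⟨w ∘ e.symm, by simpa [submatrix_mulVec_equiv] using hw⟩
  · intro ι _ W
    refine ⟨ι, inferInstance, 1, fun k i => ?_, ?_, fun g hg => ⟨0, by simpa using hg⟩⟩
    · by_cases h : k = i <;> simp [one_apply, h]
    · ext _ j
      exact j.elim
  · intro K _ ih ι _ W
    set α : ι → ℝ := fun i => W i none
    set W' : Matrix ι K ℝ := fun i k => W i (some k)
    have hW : ∀ w, W *ᵥ w = W' *ᵥ (w ∘ some) + w none • α := by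
      intro w
      ext i
      simp [mulVec, dotProduct, Fintype.sum_option, W', α, add_comm, mul_comm]
    obtain ⟨κ₁, _, Y₁, hY₁0, hY₁α, hY₁⟩ := fourierMotzkin_step α
    obtain ⟨κ₂, _, Y₂, hY₂0, hY₂W, hY₂⟩ := ih (Y₁ * W')
    refine ⟨κ₂, inferInstance, Y₂ * Y₁, mul_row_nonneg hY₂0 hY₁0, ?_, fun g hg => ?_⟩
    · ext k (_ | j)
      · change ((Y₂ * Y₁) *ᵥ α) k = 0
        rw [← mulVec_mulVec, hY₁α, mulVec_zero, Pi.zero_apply]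
      · change ((Y₂ * Y₁) * W') k j = 0
        rw [Matrix.mul_assoc, hY₂W, Matrix.zero_apply]
    · rw [← mulVec_mulVec] at hg
      obtain ⟨w, hw⟩ := hY₂ _ hg
      obtain ⟨t, ht⟩ := hY₁ (g - W' *ᵥ w) (by
        rw [mulVec_sub, sub_nonpos, mulVec_mulVec]; exact hw)
      refine ⟨fun o => o.elim t w, ?_⟩
      rw [hW]
      exact sub_le_iff_le_add'.1 ht

lemma mulVec_nonpos_of_le_mulVec {κ ι K : Type} [Fintype ι] [Fintype K] {Y : Matrix κ ι ℝ}
    {W : Matrix ι K ℝ} (hY : ∀ k, 0 ≤ Y k) (hYW : Y * W = 0) {g : ι → ℝ} {w : K → ℝ}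
    (h : g ≤ W *ᵥ w) : Y *ᵥ g ≤ 0 := by
  intro k
  calc (Y *ᵥ g) k ≤ (Y *ᵥ (W *ᵥ w)) k := dotProduct_le_dotProduct_of_nonneg_left h (hY k)
    _ = 0 := by rw [mulVec_mulVec, hYW, zero_mulVec, Pi.zero_apply]

lemma exists_pos_mul_le_of_forall_lt {κ : Type*} [Finite κ] {m e : κ → ℝ} {d s₀ : ℝ}
    (hm : 0 ≤ m) (hs₀ : ∀ k, e k ≤ m k * s₀) (h : ∀ s < d, ∃ k, m k * s < e k) :
    ∃ k, 0 < m k ∧ m k * d ≤ e k := by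
  by_contra! H
  have hev : ∀ᶠ s in 𝓝[<] d, ∀ k, e k ≤ m k * s := by
    refine eventually_all.2 fun k => ?_
    rcases (hm k).eq_or_lt with hzero | hpos
    · refine .of_forall fun s => ?_
      simpa [← hzero] using hs₀ k
    · have : Tendsto (fun s => m k * s) (𝓝 d) (𝓝 (m k * d)) :=
        tendsto_const_nhds.mul tendsto_id
      exact (this.eventually_const_lt (H k hpos)).filter_mono nhdsWithin_le_nhds |>.mono
        fun _ => le_of_lt
  obtain ⟨s, hs, hsd⟩ := (hev.and self_mem_nhdsWithin).exists
  obtain ⟨k, hk⟩ := h s hsd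
  exact (hs k).not_gt hk

theorem affine_farkas {ι K : Type} [Fintype ι] [Fintype K] {A : Matrix ι K ℝ} {c : ι → ℝ}
    {a : K → ℝ} {d : ℝ} (hne : ∃ x, c ≤ A *ᵥ x) (hd : ∀ x, c ≤ A *ᵥ x → d ≤ a ⬝ᵥ x) :
    ∃ y, 0 ≤ y ∧ y ᵥ* A = a ∧ d ≤ y ⬝ᵥ c := by
  -- eliminate `x` from the system `c ≤ A x`, `a ⬝ x ≤ s`, leaving inequalities in `s` alone
  let W : Matrix (Option ι) K ℝ := fun o => o.elim (-a) A
  let g : ℝ → Option ι → ℝ := fun s o => o.elim (-s) c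
  have hg : ∀ s x, g s ≤ W *ᵥ x ↔ c ≤ A *ᵥ x ∧ a ⬝ᵥ x ≤ s := by
    intro s x
    have hnone : (W *ᵥ x) none = -(a ⬝ᵥ x) := neg_dotProduct a x
    rw [Pi.le_def, Option.forall, and_comm, Pi.le_def]
    simp only [g, Option.elim_none, Option.elim_some, hnone, neg_le_neg_iff]
    rfl
  obtain ⟨κ, _, Y, hY0, hYW, hY⟩ := fourierMotzkin W
  let m : κ → ℝ := fun k => Y k none
  let y : κ → ι → ℝ := fun k i => Y k (some i)
  have hYg : ∀ s k, (Y *ᵥ g s) k = y k ⬝ᵥ c - m k * s := by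
    intro s k
    simp [mulVec, dotProduct, Fintype.sum_option, g, y, m]
    ring
  have hyA : ∀ k, y k ᵥ* A = m k • a := by
    intro k
    ext j
    have : (Y * W) k j = 0 := by rw [hYW]; rfl
    rw [mul_apply] at this
    simp only [Fintype.sum_option] at this
    dsimp only [W, Option.elim, Pi.neg_apply] at this
    simp only [vecMul, dotProduct, Pi.smul_apply, smul_eq_mul, y, m]
    linarith
  obtain ⟨x₀, hx₀⟩ := hne
  have hfeas : ∀ k, y k ⬝ᵥ c ≤ m k * (a ⬝ᵥ x₀) := fun k => by
    have := mulVec_nonpos_of_le_mulVec hY0 hYW ((hg _ x₀).2 ⟨hx₀, le_rfl⟩) k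
    rw [hYg, Pi.zero_apply] at this
    linarith
  have hinfeas : ∀ s < d, ∃ k, m k * s < y k ⬝ᵥ c := fun s hs => by
    by_contra! H
    obtain ⟨x, hx⟩ := hY (g s) fun k => by rw [hYg, Pi.zero_apply]; linarith [H k]
    obtain ⟨hcx, hax⟩ := (hg s x).1 hx
    linarith [hd x hcx]
  obtain ⟨k, hmk, hk⟩ := exists_pos_mul_le_of_forall_lt (fun k => hY0 k none) hfeas hinfeas
  refine ⟨(m k)⁻¹ • y k, smul_nonneg (inv_nonneg.2 hmk.le) fun i => hY0 k (some i), ?_, ?_⟩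
  · rw [smul_vecMul, hyA, smul_smul, inv_mul_cancel₀ hmk.ne', one_smul]
  · rw [smul_dotProduct, smul_eq_mul, le_inv_mul_iff₀ hmk]
    linarith

lemma exists_nonneg_dotProduct_eq_one_pos {ι : Type} [Fintype ι] {b g : ι → ℝ} (hb : 0 ≤ b)
    {i₀ : ι} (hi₀ : 0 < b i₀) (hg : ¬ g ≤ 0) : ∃ z, 0 ≤ z ∧ z ⬝ᵥ b = 1 ∧ 0 < z ⬝ᵥ g := by
  classical
  obtain ⟨i, hi⟩ : ∃ i, 0 < g i := by simpa [Pi.le_def] using hg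
  have hev : ∀ᶠ μ in 𝓝[>] (0 : ℝ), 0 < g i + μ * g i₀ :=
    nhdsWithin_le_nhds <| Tendsto.eventually_const_lt (by simpa using hi)
      (tendsto_const_nhds.add (tendsto_id.mul_const (g i₀)))
  obtain ⟨μ, hμg, hμ⟩ := (hev.and self_mem_nhdsWithin).exists
  have hD : 0 < b i + μ * b i₀ := add_pos_of_nonneg_of_pos (hb i) (mul_pos hμ hi₀)
  refine ⟨(b i + μ * b i₀)⁻¹ • (Pi.single i 1 + μ • Pi.single i₀ 1), ?_, ?_, ?_⟩
  · exact smul_nonneg (inv_nonneg.2 hD.le) (add_nonneg (Pi.single_nonneg.2 zero_le_one)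
      (smul_nonneg (le_of_lt hμ) (Pi.single_nonneg.2 zero_le_one)))
  · rw [smul_dotProduct, add_dotProduct, smul_dotProduct, single_dotProduct, single_dotProduct]
    simp only [one_mul, smul_eq_mul]
    exact inv_mul_cancel₀ hD.ne'
  · rw [smul_dotProduct, add_dotProduct, smul_dotProduct, single_dotProduct, single_dotProduct]
    simp only [one_mul, smul_eq_mul]
    exact mul_pos (inv_pos.2 hD) hμg

lemma LinearMap.apply_eq_dotProduct {K : Type*} [Fintype K] [DecidableEq K]
    (φ : (K → ℝ) →ₗ[ℝ] ℝ) (w : K → ℝ) : φ w = (fun k => φ (Pi.single k 1)) ⬝ᵥ w := by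
  conv_lhs => rw [← (dotProductEquiv ℝ K).apply_symm_apply φ]
  rfl

lemma LinearMap.apply_prod_eq {K : Type*} [Fintype K] [DecidableEq K] (φ : (K → ℝ) × ℝ →ₗ[ℝ] ℝ)
    (ω : K → ℝ) (s : ℝ) :
    φ (ω, s) = (∑ j, φ (Pi.single j 1, 0) * ω j) + φ (0, 1) * s := by
  have hω := (φ ∘ₗ LinearMap.inl ℝ _ ℝ).apply_eq_dotProduct ω
  rw [LinearMap.comp_apply, LinearMap.inl_apply] at hω
  calc φ (ω, s) = φ (ω, 0) + s • φ (0, 1) := by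
        rw [← map_smul, Prod.smul_mk, smul_zero, smul_eq_mul, mul_one, ← map_add, Prod.mk_add_mk,
          add_zero, zero_add]
    _ = _ := by rw [hω, smul_eq_mul, mul_comm s]; rfl

section Polyhedral

variable {E : Type*} [AddCommGroup E] [Module ℝ E]

def IsPolyhedral (s : Set E) : Prop :=
  ∃ (ι : Type) (_ : Fintype ι) (φ : ι → E →ₗ[ℝ] ℝ) (c : ι → ℝ), s = {x | ∀ i, c i ≤ φ i x}

lemma isPolyhedral_setOf_le (φ : E →ₗ[ℝ] ℝ) (c : ℝ) : IsPolyhedral {x | c ≤ φ x} :=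
  ⟨Unit, inferInstance, fun _ => φ, fun _ => c, by simp⟩

lemma IsPolyhedral.inter {s t : Set E} (hs : IsPolyhedral s) (ht : IsPolyhedral t) :
    IsPolyhedral (s ∩ t) := by
  obtain ⟨ι, _, φ, c, rfl⟩ := hs
  obtain ⟨ι', _, φ', c', rfl⟩ := ht
  exact ⟨ι ⊕ ι', inferInstance, Sum.elim φ φ', Sum.elim c c', by ext; simp [Sum.forall]⟩

lemma IsPolyhedral.iInter {κ : Type} [Fintype κ] {s : κ → Set E}
    (hs : ∀ k, IsPolyhedral (s k)) : IsPolyhedral (⋂ k, s k) := by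
  choose ι _ φ c hs using hs
  exact ⟨Σ k, ι k, inferInstance, fun p => φ p.1 p.2, fun p => c p.1 p.2, by
    ext; simp [hs, Sigma.forall]⟩

lemma isPolyhedral_setOf_eq (φ : E →ₗ[ℝ] ℝ) (c : ℝ) : IsPolyhedral {x | φ x = c} := by
  convert (isPolyhedral_setOf_le φ c).inter (isPolyhedral_setOf_le (-φ) (-c)) using 1
  ext
  simp [le_antisymm_iff, and_comm]

theorem IsPolyhedral.image_fst {K : Type} [Fintype K] {s : Set (E × (K → ℝ))}
    (hs : IsPolyhedral s) : IsPolyhedral (Prod.fst '' s) := by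
  classical
  obtain ⟨ι, _, φ, c, rfl⟩ := hs
  let W : Matrix ι K ℝ := fun i k => φ i (0, Pi.single k 1)
  have hφ : ∀ i x w, φ i (x, w) = φ i (x, 0) + (W *ᵥ w) i := by
    intro i x w
    have : (W *ᵥ w) i = (φ i ∘ₗ LinearMap.inr ℝ E (K → ℝ)) w :=
      ((φ i ∘ₗ LinearMap.inr ℝ E (K → ℝ)).apply_eq_dotProduct w).symm
    rw [this, LinearMap.comp_apply, LinearMap.inr_apply, ← map_add, Prod.mk_add_mk, add_zero,
      zero_add]
  obtain ⟨κ, _, Y, hY0, hYW, hY⟩ := fourierMotzkin W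
  refine ⟨κ, inferInstance, fun k => ∑ i, Y k i • (φ i ∘ₗ LinearMap.inl ℝ E (K → ℝ)),
    fun k => Y k ⬝ᵥ c, ?_⟩
  ext x
  let φx : ι → ℝ := fun i => φ i (x, 0)
  have hg : ∀ w, (∀ i, c i ≤ φ i (x, w)) ↔ c - φx ≤ W *ᵥ w := by
    refine fun w => forall_congr' fun i => ?_
    rw [hφ, Pi.sub_apply, sub_le_iff_le_add']
  have hYg : Y *ᵥ (c - φx) ≤ 0 ↔
      ∀ k, Y k ⬝ᵥ c ≤ (∑ i, Y k i • (φ i ∘ₗ LinearMap.inl ℝ E (K → ℝ))) x := by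
    rw [mulVec_sub, sub_nonpos]
    refine forall_congr' fun k => ?_
    simp [mulVec, dotProduct, LinearMap.sum_apply, φx]
  simp only [Set.mem_image, Prod.exists, exists_and_right, exists_eq_right, Set.mem_ofPred_eq,
    hg, ← hYg]
  exact ⟨fun ⟨w, hw⟩ => mulVec_nonpos_of_le_mulVec hY0 hYW hw, hY _⟩

theorem IsPolyhedral.exists_coefficients {n : ℕ} {s : Set ((Fin n → ℝ) × ℝ)}
    (hs : IsPolyhedral s) : ∃ (N : ℕ) (u : Fin N → (Fin n → ℝ)) (b : Fin N → ℝ) (c : Fin N → ℝ),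
      s = {p | ∀ i, c i ≤ (∑ j, u i j * p.1 j) + b i * p.2} := by
  obtain ⟨ι, _, φ, c, rfl⟩ := hs
  let e := Fintype.equivFin ι
  refine ⟨Fintype.card ι, fun i j => φ (e.symm i) (Pi.single j 1, 0), fun i => φ (e.symm i) (0, 1),
    fun i => c (e.symm i), ?_⟩
  ext ⟨ω, s⟩
  exact e.forall_congr_left.trans (forall_congr' fun i => by rw [LinearMap.apply_prod_eq])

end Polyhedral

section Conjugate

variable {n : ℕ} {f : (Fin n → ℝ) → EReal}

lemma le_conjFn {ω : Fin n → ℝ} {s : ℝ} (h : f ω ≤ s) (v : Fin n → ℝ) :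
    ((v ⬝ᵥ ω - s : ℝ) : EReal) ≤ conjFn f v :=
  (EReal.sub_le_sub le_rfl h).trans (le_iSup (fun ω => ((v ⬝ᵥ ω : ℝ) : EReal) - f ω) ω)

lemma conjFn_le_iff (hf : ∀ ω, f ω ≠ ⊥) {v : Fin n → ℝ} {t : ℝ} :
    conjFn f v ≤ t ↔ ∀ ω (s : ℝ), f ω ≤ s → v ⬝ᵥ ω - s ≤ t := by
  refine ⟨fun h ω s hs => by exact_mod_cast (le_conjFn hs v).trans h, fun h => iSup_le fun ω => ?_⟩
  cases hω : f ω using EReal.rec with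
  | bot => exact absurd hω (hf ω)
  | coe r => exact_mod_cast h ω r hω.le
  | top => simp

lemma conjFn_ne_bot (h : (epiSet f).Nonempty) (v : Fin n → ℝ) : conjFn f v ≠ ⊥ := by
  obtain ⟨⟨ω, s⟩, hs⟩ := h
  exact ne_bot_of_le_ne_bot (EReal.coe_ne_bot _) (le_conjFn hs v)

lemma conjFn_conjFn_le (f : (Fin n → ℝ) → EReal) : conjFn (conjFn f) ≤ f := by
  intro ω
  refine iSup_le fun v => ?_
  cases hω : f ω using EReal.rec with
  | bot =>
    have : conjFn f v = ⊤ := by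
      refine top_le_iff.1 ((le_iSup (fun ω => ((v ⬝ᵥ ω : ℝ) : EReal) - f ω) ω).trans_eq' ?_)
      rw [hω, EReal.sub_bot (EReal.coe_ne_bot _)]
    rw [this, EReal.sub_top]
  | coe r =>
    calc ((ω ⬝ᵥ v : ℝ) : EReal) - conjFn f v
        ≤ ((ω ⬝ᵥ v : ℝ) : EReal) - ((v ⬝ᵥ ω - r : ℝ) : EReal) :=
          EReal.sub_le_sub le_rfl (le_conjFn hω.le v)
      _ = r := by rw [dotProduct_comm, ← EReal.coe_sub, sub_sub_cancel]
  | top => exact le_top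

end Conjugate

def EpigraphSystem {n : ℕ} {ι : Type} (f : (Fin n → ℝ) → EReal)
    (U : Matrix ι (Fin n) ℝ) (b c : ι → ℝ) : Prop :=
  ∀ ω (s : ℝ), f ω ≤ s ↔ c ≤ U *ᵥ ω + s • b

namespace EpigraphSystem

variable {n : ℕ} {ι : Type} {f : (Fin n → ℝ) → EReal} {U : Matrix ι (Fin n) ℝ} {b c : ι → ℝ}

lemma nonneg (h : EpigraphSystem f U b c) (hne : (epiSet f).Nonempty) : 0 ≤ b := by
  obtain ⟨⟨ω, s₀⟩, h₀⟩ := hne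
  intro i
  by_contra! hi
  change b i < 0 at hi
  set s := max s₀ ((c i - (U *ᵥ ω) i - 1) / b i)
  have hrow := (h ω s).1 (h₀.trans (EReal.coe_le_coe_iff.2 (le_max_left _ _))) i
  have hsb : s * b i ≤ c i - (U *ᵥ ω) i - 1 :=
    calc s * b i ≤ (c i - (U *ᵥ ω) i - 1) / b i * b i :=
          mul_le_mul_of_nonpos_right (le_max_right _ _) hi.le
      _ = c i - (U *ᵥ ω) i - 1 := div_mul_cancel₀ _ hi.ne
  simp only [Pi.add_apply, Pi.smul_apply, smul_eq_mul] at hrow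
  linarith

lemma exists_pos (h : EpigraphSystem f U b c) (hbot : ∀ ω, f ω ≠ ⊥)
    (hne : (epiSet f).Nonempty) : ∃ i, 0 < b i := by
  by_contra! hb
  obtain ⟨⟨ω, s₀⟩, h₀⟩ := hne
  have hle : ∀ s ≤ s₀, f ω ≤ s := fun s hs => (h ω s).2 fun i => ((h ω s₀).1 h₀ i).trans (by
    simp only [Pi.add_apply, Pi.smul_apply, smul_eq_mul]
    nlinarith [hb i])
  refine hbot ω ((EReal.eq_bot_iff_forall_lt _).2 fun y => ?_)
  exact (hle (min y s₀ - 1) (by linarith [min_le_right y s₀])).trans_lt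
    (EReal.coe_lt_coe_iff.2 (by linarith [min_le_left y s₀]))

theorem conjFn_le_iff_exists [Fintype ι] (h : EpigraphSystem f U b c) (hbot : ∀ ω, f ω ≠ ⊥)
    (hne : (epiSet f).Nonempty) {v : Fin n → ℝ} {t : ℝ} :
    conjFn f v ≤ t ↔ ∃ z, 0 ≤ z ∧ z ᵥ* U = -v ∧ z ⬝ᵥ b = 1 ∧ -t ≤ z ⬝ᵥ c := by
  rw [conjFn_le_iff hbot]
  constructor
  · intro hv
    let A : Matrix ι (Option (Fin n)) ℝ := fun i o => o.elim (b i) (U i)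
    have hA : ∀ x, A *ᵥ x = U *ᵥ (x ∘ some) + x none • b := by
      intro x
      ext i
      simp [A, mulVec, dotProduct, Fintype.sum_option, add_comm, mul_comm]
    obtain ⟨⟨ω₀, s₀⟩, h₀⟩ := hne
    obtain ⟨z, hz0, hzA, hzc⟩ := affine_farkas (A := A) (c := c)
      (a := fun o => o.elim 1 (-v)) (d := -t)
      ⟨fun o => o.elim s₀ ω₀, by rw [hA]; exact (h ω₀ s₀).1 h₀⟩ fun x hx => by
        have := hv (x ∘ some) (x none) ((h _ _).2 (hA x ▸ hx))
        simp [dotProduct, Fintype.sum_option] at this ⊢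
        linarith
    exact ⟨z, hz0, funext fun j => congr_fun hzA (some j), congr_fun hzA none, hzc⟩
  · rintro ⟨z, hz0, hzU, hzb, hzc⟩ ω s hs
    have := dotProduct_le_dotProduct_of_nonneg_left ((h ω s).1 hs) hz0
    rw [dotProduct_add, dotProduct_mulVec, hzU, dotProduct_smul, hzb, neg_dotProduct,
      smul_eq_mul, mul_one] at this
    linarith

theorem isPolyhedral_epiSet_conjFn [Fintype ι] (h : EpigraphSystem f U b c) (hbot : ∀ ω, f ω ≠ ⊥)
    (hne : (epiSet f).Nonempty) : IsPolyhedral (epiSet (conjFn f)) := by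
  have hQ : epiSet (conjFn f) = Prod.fst '' {p : ((Fin n → ℝ) × ℝ) × (ι → ℝ) |
      0 ≤ p.2 ∧ p.2 ᵥ* U = -p.1.1 ∧ p.2 ⬝ᵥ b = 1 ∧ -p.1.2 ≤ p.2 ⬝ᵥ c} := by
    ext ⟨v, t⟩
    simp [epiSet, h.conjFn_le_iff_exists hbot hne]
  rw [hQ]
  refine IsPolyhedral.image_fst ?_
  let fst₂ := LinearMap.fst ℝ ((Fin n → ℝ) × ℝ) (ι → ℝ)
  let snd₂ := LinearMap.snd ℝ ((Fin n → ℝ) × ℝ) (ι → ℝ)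
  have hz : ∀ i, IsPolyhedral {p : ((Fin n → ℝ) × ℝ) × (ι → ℝ) | 0 ≤ p.2 i} := fun i =>
    isPolyhedral_setOf_le (LinearMap.proj i ∘ₗ snd₂) 0
  have hU : ∀ j, IsPolyhedral {p : ((Fin n → ℝ) × ℝ) × (ι → ℝ) | (p.2 ᵥ* U) j + p.1.1 j = 0} :=
    fun j => isPolyhedral_setOf_eq (LinearMap.proj j ∘ₗ
      (U.vecMulLinear ∘ₗ snd₂ + LinearMap.fst ℝ (Fin n → ℝ) ℝ ∘ₗ fst₂)) 0
  have hb : IsPolyhedral {p : ((Fin n → ℝ) × ℝ) × (ι → ℝ) | b ⬝ᵥ p.2 = 1} :=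
    isPolyhedral_setOf_eq (dotProductBilin ℝ ℝ b ∘ₗ snd₂) 1
  have hc : IsPolyhedral {p : ((Fin n → ℝ) × ℝ) × (ι → ℝ) | 0 ≤ p.1.2 + c ⬝ᵥ p.2} :=
    isPolyhedral_setOf_le (LinearMap.snd ℝ (Fin n → ℝ) ℝ ∘ₗ fst₂ +
      dotProductBilin ℝ ℝ c ∘ₗ snd₂) 0
  convert ((IsPolyhedral.iInter hz).inter (IsPolyhedral.iInter hU)).inter (hb.inter hc) using 1
  ext ⟨⟨v, t⟩, z⟩
  simp [Pi.le_def, funext_iff, eq_neg_iff_add_eq_zero, dotProduct_comm z, neg_le_iff_add_nonneg',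
    and_assoc]

theorem epiSet_conjFn_nonempty [Fintype ι] (h : EpigraphSystem f U b c) (hbot : ∀ ω, f ω ≠ ⊥)
    (hne : (epiSet f).Nonempty) : (epiSet (conjFn f)).Nonempty := by
  classical
  obtain ⟨i, hi⟩ := h.exists_pos hbot hne
  refine ⟨(-((b i)⁻¹ • U i), -((b i)⁻¹ * c i)), (h.conjFn_le_iff_exists hbot hne).2
    ⟨Pi.single i (b i)⁻¹, Pi.single_nonneg.2 (inv_nonneg.2 hi.le), ?_, ?_, ?_⟩⟩
  · rw [single_vecMul, neg_neg]
    rfl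
  · rw [single_dotProduct, inv_mul_cancel₀ hi.ne']
  · rw [single_dotProduct, neg_neg]

theorem le_conjFn_conjFn [Fintype ι] (h : EpigraphSystem f U b c) (hbot : ∀ ω, f ω ≠ ⊥)
    (hne : (epiSet f).Nonempty) : f ≤ conjFn (conjFn f) := by
  intro ω
  obtain ⟨i₀, hi₀⟩ := h.exists_pos hbot hne
  refine EReal.ge_of_forall_gt_iff_ge.1 fun t ht => ?_
  have hviol : ¬ c - U *ᵥ ω - t • b ≤ 0 := fun hle =>
    ht.not_ge ((h ω t).2 (by rwa [sub_sub, sub_nonpos] at hle))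
  obtain ⟨z, hz0, hzb, hzg⟩ := exists_nonneg_dotProduct_eq_one_pos (h.nonneg hne) hi₀ hviol
  have hdual : conjFn f (-(z ᵥ* U)) ≤ ((-(z ⬝ᵥ c) : ℝ) : EReal) :=
    (h.conjFn_le_iff_exists hbot hne).2 ⟨z, hz0, (neg_neg _).symm, hzb, (neg_neg _).le⟩
  refine le_trans ?_ (le_conjFn hdual ω)
  rw [dotProduct_sub, dotProduct_sub, dotProduct_mulVec, dotProduct_smul, hzb] at hzg
  rw [EReal.coe_le_coe_iff, dotProduct_neg, dotProduct_comm]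
  simp only [smul_eq_mul, mul_one] at hzg
  linarith

end EpigraphSystem

/-- The conjugate of a proper polyhedral function is a proper polyhedral function, and
biduality holds: `f** = f`. -/
theorem stmt14 {n : ℕ} (f : (Fin n → ℝ) → EReal) (hf : IsProperPolyhedralFn f) :
    IsProperPolyhedralFn (conjFn f) ∧ conjFn (conjFn f) = f := by
  obtain ⟨hbot, hne, N, u, b, c, hP⟩ := hf
  have h : EpigraphSystem f u b c := fun ω s => by
    change (ω, s) ∈ epiSet f ↔ _
    rw [hP]
    simp [Pi.le_def, mulVec, dotProduct, mul_comm]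
  exact ⟨⟨conjFn_ne_bot hne, h.epiSet_conjFn_nonempty hbot hne,
    (h.isPolyhedral_epiSet_conjFn hbot hne).exists_coefficients⟩,
    le_antisymm (conjFn_conjFn_le f) (h.le_conjFn_conjFn hbot hne)⟩
end

section
/- (Draisma's lemma) Let (L,w) be a valued field extending (K,v). Consider a finite system over K consisting of linear equations a_{i1}x₁ + ⋯ + a_{it}x_t = b_i (1 ≤ i ≤ r) and valuation inequalities w(a_{i1}x₁ + ⋯ + a_{it}x_t) ≥ λ_i (r+1 ≤ i ≤ r+s), with all a_{ij}, b_i ∈ K and λ_i ∈ ℝ. If this system has a solution in L^t, then it has a solution in K^t. -/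
/-!
Treat each equation `∑ aᵢⱼ xⱼ = bᵢ` as the inequality `⊤ ≤ w (∑ aᵢⱼ xⱼ - bᵢ)`, so that only
valuation inequalities `λᵢ ≤ w (ℓᵢ(x))` on affine forms `ℓᵢ` with coefficients in `K` remain,
and eliminate the variables one at a time, as in Fourier–Motzkin elimination. Dividing by the
coefficient of `x₀` turns every row that involves `x₀` into `μᵢ ≤ w (x₀ + ℓᵢ(y))`, a closed ball
around `-ℓᵢ(y)`. Finitely many ultrametric balls have a common point as soon as they meet
pairwise, i.e. as soon as `min μᵢ μⱼ ≤ w (ℓᵢ(y) - ℓⱼ(y))`; these are again valuation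
inequalities on affine forms over `K`, now in the remaining variables `y`. So a solution over `L`
gives one of the reduced system over `L`, by induction one over `K`, and the ball lemma in `K`
provides `x₀ ∈ K`.
-/

namespace AddValuation

variable {R Γ₀ : Type*} [LinearOrderedAddCommMonoidWithTop Γ₀]

theorem exists_forall_le_map_add_of_forall_min_le_map_sub [Ring R] (u : AddValuation R Γ₀)
    {ι : Type*} [Finite ι] (c : ι → R) (μ : ι → Γ₀)
    (h : ∀ i j, min (μ i) (μ j) ≤ u (c i - c j)) : ∃ x, ∀ i, μ i ≤ u (x + c i) := by
  cases isEmpty_or_nonempty ι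
  · exact ⟨0, isEmptyElim⟩
  -- the centre of the smallest ball lies in all the others
  obtain ⟨i₀, hi₀⟩ := Finite.exists_max μ
  refine ⟨-c i₀, fun i => ?_⟩
  simpa [neg_add_eq_sub, min_eq_left (hi₀ i)] using h i i₀

theorem add_map_le_map_mul_iff [Field R] (u : AddValuation R Γ₀) {c : R} (hc : c ≠ 0)
    {γ : Γ₀} {z : R} : γ + u c ≤ u (c * z) ↔ γ ≤ u z := by
  rw [u.map_mul, add_comm (u c)]
  refine ⟨fun h => ?_, fun h => add_le_add_left h _⟩
  have hcancel : u c + u c⁻¹ = 0 := by rw [← u.map_mul, mul_inv_cancel₀ hc, u.map_one]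
  simpa [add_assoc, hcancel] using add_le_add_left h (u c⁻¹)

theorem comap_apply {S : Type*} [Ring R] [Ring S] (f : S →+* R) (u : AddValuation R Γ₀) (s : S) :
    u.comap f s = u (f s) := rfl

end AddValuation

section AffineEval

variable {K F : Type*} [Ring K] [Ring F] (φ : K →+* F) {n : ℕ}

def affineEval (p : (Fin n → K) × K) (x : Fin n → F) : F :=
  ∑ j, φ (p.1 j) * x j + φ p.2

theorem affineEval_smul (c : K) (p : (Fin n → K) × K) (x : Fin n → F) :
    affineEval φ (c • p) x = φ c * affineEval φ p x := by
  simp [affineEval, mul_add, Finset.mul_sum, mul_assoc]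

theorem affineEval_sub (p q : (Fin n → K) × K) (x : Fin n → F) :
    affineEval φ (p - q) x = affineEval φ p x - affineEval φ q x := by
  simp only [affineEval, Prod.fst_sub, Prod.snd_sub, Pi.sub_apply, map_sub, sub_mul,
    Finset.sum_sub_distrib]
  abel

def rowTail (p : (Fin (n + 1) → K) × K) : (Fin n → K) × K := (Fin.tail p.1, p.2)

theorem affineEval_eq_add_rowTail (p : (Fin (n + 1) → K) × K) (x : Fin (n + 1) → F) :
    affineEval φ p x = φ (p.1 0) * x 0 + affineEval φ (rowTail p) (Fin.tail x) := by
  simp [affineEval, rowTail, Fin.sum_univ_succ, Fin.tail, add_assoc]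

theorem affineEval_eq_rowTail {p : (Fin (n + 1) → K) × K} (hp : p.1 0 = 0) (x : Fin (n + 1) → F) :
    affineEval φ p x = affineEval φ (rowTail p) (Fin.tail x) := by
  rw [affineEval_eq_add_rowTail, hp, map_zero, zero_mul, zero_add]

end AffineEval

section FourierMotzkin

variable {K F Γ₀ : Type*} [Field K] [Field F] [LinearOrderedAddCommMonoidWithTop Γ₀]
  {ι : Type*} {n : ℕ} (rows : ι → (Fin (n + 1) → K) × K)

abbrev ReducedIndex : Type _ :=
  {i // (rows i).1 0 = 0} ⊕ ({i // (rows i).1 0 ≠ 0} × {i // (rows i).1 0 ≠ 0})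

def normalizedRow (i : ι) : (Fin n → K) × K := ((rows i).1 0)⁻¹ • rowTail (rows i)

def reducedRows : ReducedIndex rows → (Fin n → K) × K
  | .inl i => rowTail (rows i)
  | .inr (i, j) => normalizedRow rows i - normalizedRow rows j

variable (v : AddValuation K Γ₀) (lam : ι → Γ₀)

def normalizedBound (i : ι) : Γ₀ := lam i + v ((rows i).1 0)⁻¹

def reducedBounds : ReducedIndex rows → Γ₀
  | .inl i => lam i
  | .inr (i, j) => min (normalizedBound rows v lam i) (normalizedBound rows v lam j)

variable {rows} (u : AddValuation F Γ₀) (φ : K →+* F)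

theorem le_affineEval_iff {i : ι} (hi : (rows i).1 0 ≠ 0) (x : Fin (n + 1) → F) :
    lam i ≤ u (affineEval φ (rows i) x) ↔
      normalizedBound rows (u.comap φ) lam i ≤
        u (x 0 + affineEval φ (normalizedRow rows i) (Fin.tail x)) := by
  have hc : φ ((rows i).1 0) ≠ 0 := (map_ne_zero φ).mpr hi
  have hnorm : x 0 + affineEval φ (normalizedRow rows i) (Fin.tail x)
      = (φ ((rows i).1 0))⁻¹ * affineEval φ (rows i) x := by
    rw [normalizedRow, affineEval_smul, affineEval_eq_add_rowTail, map_inv₀]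
    field_simp
  rw [hnorm, normalizedBound, AddValuation.comap_apply, map_inv₀]
  exact (u.add_map_le_map_mul_iff (inv_ne_zero hc)).symm

theorem reducedBounds_le_affineEval_tail {x : Fin (n + 1) → F}
    (hx : ∀ i, lam i ≤ u (affineEval φ (rows i) x)) (k : ReducedIndex rows) :
    reducedBounds rows (u.comap φ) lam k ≤ u (affineEval φ (reducedRows rows k) (Fin.tail x)) := by
  rcases k with ⟨i, hi⟩ | ⟨⟨i, hi⟩, ⟨j, hj⟩⟩
  · rw [reducedBounds, reducedRows, ← affineEval_eq_rowTail φ hi]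
    exact hx i
  · have hxi := (le_affineEval_iff lam u φ hi x).mp (hx i)
    have hxj := (le_affineEval_iff lam u φ hj x).mp (hx j)
    rw [reducedBounds, reducedRows, affineEval_sub, ← add_sub_add_left_eq_sub _ _ (x 0)]
    exact le_trans (min_le_min hxi hxj) (u.map_sub _ _)

theorem exists_cons_of_reducedBounds_le [Finite ι] {y : Fin n → F}
    (hy : ∀ k, reducedBounds rows (u.comap φ) lam k ≤ u (affineEval φ (reducedRows rows k) y)) :
    ∃ x₀, ∀ i, lam i ≤ u (affineEval φ (rows i) (Fin.cons x₀ y)) := by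
  obtain ⟨x₀, hx₀⟩ := u.exists_forall_le_map_add_of_forall_min_le_map_sub
    (fun i : {i // (rows i).1 0 ≠ 0} => affineEval φ (normalizedRow rows i) y)
    (fun i => normalizedBound rows (u.comap φ) lam i) fun i j => by
      simpa only [reducedBounds, reducedRows, affineEval_sub] using hy (.inr (i, j))
  refine ⟨x₀, fun i => ?_⟩
  by_cases hi : (rows i).1 0 = 0
  · rw [affineEval_eq_rowTail φ hi, Fin.tail_cons]
    exact hy (.inl ⟨i, hi⟩)
  · rw [le_affineEval_iff lam u φ hi, Fin.cons_zero, Fin.tail_cons]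
    exact hx₀ ⟨i, hi⟩

end FourierMotzkin

theorem exists_forall_le_comap_affineEval_of_exists {K L Γ₀ : Type*} [Field K] [Field L]
    [LinearOrderedAddCommMonoidWithTop Γ₀] (w : AddValuation L Γ₀) (φ : K →+* L) {n : ℕ}
    {ι : Type*} [Finite ι] (rows : ι → (Fin n → K) × K) (lam : ι → Γ₀)
    (h : ∃ x : Fin n → L, ∀ i, lam i ≤ w (affineEval φ (rows i) x)) :
    ∃ x : Fin n → K, ∀ i, lam i ≤ w.comap φ (affineEval (RingHom.id K) (rows i) x) := by
  induction n generalizing ι with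
  | zero =>
    obtain ⟨x, hx⟩ := h
    exact ⟨Fin.elim0, fun i => by simpa [affineEval, AddValuation.comap_apply] using hx i⟩
  | succ n ih =>
    obtain ⟨x, hx⟩ := h
    obtain ⟨y, hy⟩ := ih (reducedRows rows) (reducedBounds rows (w.comap φ) lam)
      ⟨Fin.tail x, reducedBounds_le_affineEval_tail lam w φ hx⟩
    rw [← AddValuation.comap_id (w.comap φ)] at hy
    obtain ⟨x₀, hx₀⟩ := exists_cons_of_reducedBounds_le lam (w.comap φ) (RingHom.id K) hy
    exact ⟨Fin.cons x₀ y, hx₀⟩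

/-- Draisma's lemma:  let `(L,w)` be a valued field extending `(K,v)`.  If a finite system
of `K`-linear equations `Σ_j a_{ij} x_j = b_i` and valuation inequalities
`w(Σ_j a'_{ij} x_j) ≥ λ_i` with coefficients in `K` has a solution in `L^t`, then it has a
solution in `K^t`. -/
theorem stmt16 {K L : Type*} [Field K] [Field L] [Algebra K L]
    (v : K → WithTop ℝ) (w : L → WithTop ℝ)
    (hw0 : ∀ x : L, w x = ⊤ ↔ x = 0)
    (hwmul : ∀ x y : L, w (x * y) = w x + w y)
    (hwadd : ∀ x y : L, min (w x) (w y) ≤ w (x + y))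
    (hext : ∀ α : K, w (algebraMap K L α) = v α)
    (t r s : ℕ)
    (a : Fin r → Fin t → K) (b : Fin r → K)
    (a' : Fin s → Fin t → K) (lam : Fin s → ℝ)
    (hsol : ∃ x : Fin t → L,
      (∀ i, ∑ j, algebraMap K L (a i j) * x j = algebraMap K L (b i)) ∧
      (∀ i, ((lam i : ℝ) : WithTop ℝ) ≤ w (∑ j, algebraMap K L (a' i j) * x j))) :
    ∃ x : Fin t → K,
      (∀ i, ∑ j, a i j * x j = b i) ∧
      (∀ i, ((lam i : ℝ) : WithTop ℝ) ≤ v (∑ j, a' i j * x j)) := by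
  have hw1 : w 1 = 0 := by
    refine (WithTop.add_left_inj (x := w 1) (by simp [hw0])).mp ?_
    rw [add_zero, ← hwmul, mul_one]
  let W : AddValuation L (WithTop ℝ) := .of w ((hw0 0).mpr rfl) hw1 hwadd hwmul
  have hv0 (α : K) : v α = ⊤ ↔ α = 0 := by rw [← hext, hw0, map_eq_zero]
  let rows : Fin r ⊕ Fin s → (Fin t → K) × K := Sum.elim (fun i => (a i, -b i)) fun i => (a' i, 0)
  let bounds : Fin r ⊕ Fin s → WithTop ℝ := Sum.elim (fun _ => ⊤) fun i => lam i
  obtain ⟨x, hxa, hxa'⟩ := hsol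
  have hx : ∀ k, bounds k ≤ W (affineEval (algebraMap K L) (rows k) x) := by
    rintro (i | i)
    · simp [rows, bounds, affineEval, hxa i, W]
    · simpa [rows, bounds, affineEval, W, AddValuation.of_apply] using hxa' i
  obtain ⟨y, hy⟩ :=
    exists_forall_le_comap_affineEval_of_exists W (algebraMap K L) rows bounds ⟨x, hx⟩
  have hWv : ∀ α, W.comap (algebraMap K L) α = v α := hext
  simp only [hWv] at hy
  refine ⟨y, fun i => ?_, fun i => by simpa [rows, bounds, affineEval] using hy (.inr i)⟩
  simpa [rows, bounds, affineEval, hv0, add_neg_eq_zero] using hy (.inl i)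
end

section
/- Let K° be a valuation ring with fraction field K, let φ : X′ → X be a flat morphism of affine K°-schemes of finite type with generic fibers φ_η, and let Y be a closed subscheme of the generic fiber of X. Then the closure of φ_η^{-1}(Y) in X′ equals φ^{-1}(Ȳ), where Ȳ is the closure of Y in X and closures are the unique flat closed subschemes with the given generic fiber. -/
open TensorProduct

attribute [local instance] Algebra.TensorProduct.rightAlgebra

section Aux

variable {R : Type*} [CommRing R] [IsDomain R]
    (K : Type*) [Field K] [Algebra R K] [IsFractionRing R K]
    {A A' : Type*} [CommRing A] [CommRing A']
    [Algebra R A] [Algebra R A'] [Algebra A A'] [IsScalarTower R A A']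
    [Module.Flat A A']

/-- The tensor product `K ⊗[R] A` is the localization of `A` at the image of `R⁰`. -/
lemma aux_isLocalization :
    IsLocalization (Algebra.algebraMapSubmonoid A (nonZeroDivisors R)) (K ⊗[R] A) := by
  rw [← isLocalizedModule_iff_isLocalization]
  have h := TensorProduct.isBaseChange R A K
  rw [isLocalizedModule_iff_isBaseChange (nonZeroDivisors R) K]
  have he : (IsScalarTower.toAlgHom R A (K ⊗[R] A)).toLinearMap = TensorProduct.mk R K A 1 := by
    ext a; rfl
  rw [he]; exact h

set_option maxHeartbeats 1000000 in
set_option synthInstance.maxHeartbeats 200000 in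
/-- Key torsion lemma: `A'/(I ∩ A)·A'` has no `R`-torsion, because it injects into
`(K⊗A/I) ⊗[A] A'` which is (essentially) a `K`-module. -/
lemma aux_key (I : Ideal (K ⊗[R] A)) (r : R) (hr : r ∈ nonZeroDivisors R) (x : A')
    (hx : algebraMap R A' r * x ∈
      (Ideal.comap (algebraMap A (K ⊗[R] A)) I).map (algebraMap A A')) :
    x ∈ (Ideal.comap (algebraMap A (K ⊗[R] A)) I).map (algebraMap A A') := by
  set J : Ideal A := Ideal.comap (algebraMap A (K ⊗[R] A)) I with hJ
  set N := (K ⊗[R] A) ⧸ I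
  set c : A := algebraMap R A r with hc
  -- `c` acts invertibly on `N`
  have hu : IsUnit (algebraMap A (K ⊗[R] A) c) := by
    have h1 : algebraMap A (K ⊗[R] A) c = algebraMap K (K ⊗[R] A) (algebraMap R K r) := by
      rw [hc, ← IsScalarTower.algebraMap_apply, ← IsScalarTower.algebraMap_apply]
    rw [h1]
    have : algebraMap R K r ≠ 0 := by
      simpa using (IsFractionRing.injective R K).ne_iff.mpr
        (nonZeroDivisors.ne_zero hr : r ≠ (0 : R))
    exact (isUnit_iff_ne_zero.2 this).map (algebraMap K (K ⊗[R] A))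
  have φinj : Function.Injective (LinearMap.lsmul A N c) := by
    rw [← LinearMap.ker_eq_bot, eq_bot_iff]
    intro n hn
    rw [LinearMap.mem_ker] at hn
    rw [Submodule.mem_bot]
    obtain ⟨z, rfl⟩ := Ideal.Quotient.mk_surjective n
    have hn' : c • (Ideal.Quotient.mk I z) = 0 := hn
    have h2 : (Ideal.Quotient.mk I) (algebraMap A (K ⊗[R] A) c * z) = 0 := by
      rw [map_mul, Ideal.Quotient.mk_algebraMap, ← Algebra.smul_def]
      exact hn'
    rw [Ideal.Quotient.eq_zero_iff_mem] at h2 ⊢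
    have h3 : z = ↑hu.unit⁻¹ * (algebraMap A (K ⊗[R] A) c * z) := by
      rw [← mul_assoc, IsUnit.val_inv_mul, one_mul]
    rw [h3]
    exact I.mul_mem_left _ h2
  -- the quotient `A ⧸ J` injects into `N`
  have hker : LinearMap.ker (Algebra.linearMap A N) = (J : Submodule A A) := by
    ext a
    simp only [LinearMap.mem_ker, Algebra.linearMap_apply]
    rw [IsScalarTower.algebraMap_apply A (K ⊗[R] A) N,
      Ideal.Quotient.algebraMap_eq, Ideal.Quotient.eq_zero_iff_mem]
    exact Iff.rfl
  set h : (A ⧸ J) →ₗ[A] N := Submodule.liftQ J (Algebra.linearMap A N) hker.ge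
  have hinj : Function.Injective h := by
    rw [← LinearMap.ker_eq_bot]
    exact Submodule.ker_liftQ_eq_bot _ _ hker.ge hker.le
  -- flat base change preserves injections
  have Ψinj : Function.Injective (LinearMap.rTensor A' h) :=
    Module.Flat.rTensor_preserves_injective_linearMap h hinj
  have Φinj : Function.Injective (LinearMap.rTensor A' (LinearMap.lsmul A N c)) :=
    Module.Flat.rTensor_preserves_injective_linearMap _ φinj
  -- scalar multiplication by `c` on `N ⊗ A'` is `rTensor` of `lsmul c`
  have hsm : (LinearMap.lsmul A (N ⊗[A] A') c)
      = LinearMap.rTensor A' (LinearMap.lsmul A N c) := by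
    apply TensorProduct.ext'
    intro n a'
    simp [smul_tmul']
  set e := TensorProduct.quotTensorEquivQuotSMul A' J
  set π := (J • ⊤ : Submodule A A').mkQ
  have hmem : ∀ y : A', y ∈ J.map (algebraMap A A') ↔ π y = 0 := by
    intro y
    rw [show π y = Submodule.Quotient.mk y from rfl, Submodule.Quotient.mk_eq_zero,
      Ideal.smul_top_eq_map]
    exact Iff.rfl
  have hx' : π (c • x) = 0 := by
    rw [← hmem]
    rwa [Algebra.smul_def, ← IsScalarTower.algebraMap_apply]
  set t := e.symm (π x) with htdef
  have hct : c • t = 0 := by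
    apply e.injective
    rw [map_smul, htdef, e.apply_symm_apply, map_zero, ← map_smul, hx']
  have ht : LinearMap.rTensor A' (LinearMap.lsmul A N c) (LinearMap.rTensor A' h t) = 0 := by
    rw [← hsm, LinearMap.lsmul_apply, ← map_smul, hct, map_zero]
  have hΨt : LinearMap.rTensor A' h t = 0 := by
    apply Φinj
    rw [ht, map_zero]
  have ht0 : t = 0 := by
    apply Ψinj
    rw [hΨt, map_zero]
  have : π x = 0 := by
    have := congrArg e ht0
    rwa [e.apply_symm_apply, map_zero] at this
  rw [hmem]; exact this

end Aux

/-- Compatibility of taking closures (of closed subschemes of the generic fibre) with flat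
pull-back:  let `R = K°` be a valuation ring with fraction field `K`, let `A → A'` be a
flat homomorphism of flat `R`-algebras of finite type (the coordinate rings of a flat
morphism `X' → X` of affine `R`-schemes of finite type), and let `Y` be the closed
subscheme of the generic fibre of `X` given by an ideal `I` of `A_K = K ⊗[R] A`.  Then
`(I·A'_K) ∩ A' = (I ∩ A)·A'`, i.e. the closure of the preimage of `Y` equals the preimage
of the closure of `Y`. -/
theorem stmt17 {R : Type*} [CommRing R] [IsDomain R] [ValuationRing R]
    (K : Type*) [Field K] [Algebra R K] [IsFractionRing R K]
    {A A' : Type*} [CommRing A] [CommRing A']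
    [Algebra R A] [Algebra R A'] [Algebra A A'] [IsScalarTower R A A']
    [Module.Flat R A] [Module.Flat R A'] [Module.Flat A A']
    (hA : Algebra.FiniteType R A) (hA' : Algebra.FiniteType R A')
    (I : Ideal (K ⊗[R] A)) :
    Ideal.comap (Algebra.TensorProduct.includeRight : A' →ₐ[R] K ⊗[R] A').toRingHom
        (Ideal.map (Algebra.TensorProduct.map (AlgHom.id R K)
            (IsScalarTower.toAlgHom R A A')).toRingHom I)
      = Ideal.map (algebraMap A A')
          (Ideal.comap (Algebra.TensorProduct.includeRight : A →ₐ[R] K ⊗[R] A).toRingHom I) := by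
  haveI locA : IsLocalization (Algebra.algebraMapSubmonoid A (nonZeroDivisors R)) (K ⊗[R] A) :=
    aux_isLocalization K
  haveI locA' : IsLocalization (Algebra.algebraMapSubmonoid A' (nonZeroDivisors R)) (K ⊗[R] A') :=
    aux_isLocalization K
  have hιA : (Algebra.TensorProduct.includeRight : A →ₐ[R] K ⊗[R] A).toRingHom
      = algebraMap A (K ⊗[R] A) := rfl
  have hιA' : (Algebra.TensorProduct.includeRight : A' →ₐ[R] K ⊗[R] A').toRingHom
      = algebraMap A' (K ⊗[R] A') := rfl
  rw [hιA, hιA']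
  set g := (Algebra.TensorProduct.map (AlgHom.id R K) (IsScalarTower.toAlgHom R A A')).toRingHom
    with hgdef
  set J : Ideal A := Ideal.comap (algebraMap A (K ⊗[R] A)) I with hJ
  have hg : g.comp (algebraMap A (K ⊗[R] A)) = (algebraMap A' (K ⊗[R] A')).comp (algebraMap A A') := by
    ext a
    show g (1 ⊗ₜ[R] a) = 1 ⊗ₜ[R] (algebraMap A A' a)
    simp [hgdef]
  have hI : Ideal.map (algebraMap A (K ⊗[R] A)) J = I :=
    IsLocalization.map_comap (Algebra.algebraMapSubmonoid A (nonZeroDivisors R)) (K ⊗[R] A) I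
  have hmapg : Ideal.map g I
      = Ideal.map (algebraMap A' (K ⊗[R] A')) (J.map (algebraMap A A')) := by
    rw [← hI, Ideal.map_map, hg, ← Ideal.map_map]
  refine le_antisymm ?_ ?_
  · intro x hx
    rw [Ideal.mem_comap, hmapg] at hx
    obtain ⟨⟨a, m⟩, hm⟩ := (IsLocalization.mem_map_algebraMap_iff
      (Algebra.algebraMapSubmonoid A' (nonZeroDivisors R)) (K ⊗[R] A')).mp hx
    rw [← map_mul] at hm
    obtain ⟨d, hd⟩ := (IsLocalization.eq_iff_exists
      (Algebra.algebraMapSubmonoid A' (nonZeroDivisors R)) (K ⊗[R] A')).mp hm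
    obtain ⟨sm, hsm, hsm'⟩ := m.2
    obtain ⟨sd, hsd, hsd'⟩ := d.2
    have hmem : algebraMap R A' (sd * sm) * x ∈ J.map (algebraMap A A') := by
      have : algebraMap R A' (sd * sm) * x = ↑d * (x * ↑m) := by
        rw [map_mul, hsd', hsm']; ring
      rw [this, hd]
      exact Ideal.mul_mem_left _ _ a.2
    exact aux_key K I (sd * sm) (mul_mem hsd hsm) x hmem
  · rw [Ideal.map_le_iff_le_comap]
    intro a ha
    rw [Ideal.mem_comap, Ideal.mem_comap]
    have : algebraMap A' (K ⊗[R] A') (algebraMap A A' a)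
        = g (algebraMap A (K ⊗[R] A) a) := by
      rw [← RingHom.comp_apply, ← hg, RingHom.comp_apply]
    rw [this]
    exact Ideal.mem_map_of_mem _ ha
end
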